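/- arXiv:1408.6725 — 11 statements merged into one kernel-verified Lean document; each statement's English description precedes it below -/
import Mathlib

section
/- Let T be a μ-way latin trade and let i₁ ≠ i₂ be rows such that cells (i₁,j) and (i₂,j) are both nonempty. If |C_j| = μ+1 and |R_{i₁}| = |R_{i₂}| = μ, then R_{i₁} ∪ R_{i₂} = C_j and |R_{i₁} ∩ R_{i₂}| = μ−1. -/
/-- A partial latin rectangle on an `r × n` array with natural-number symbols:
each symbol occurs at most once in each row and in each column. -/
def IsPartialLatinRect {r n : ℕ} (f : Fin r → Fin n → Option ℕ) : Prop :=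
  (∀ i j₁ j₂ s, f i j₁ = some s → f i j₂ = some s → j₁ = j₂) ∧
  (∀ i₁ i₂ j s, f i₁ j = some s → f i₂ j = some s → i₁ = i₂)

/-- A μ-way latin trade: μ partial latin rectangles with the same filled cells,
pairwise distinct entries in each filled cell, and common row symbol sets and
column symbol sets. -/
def IsMuWayLatinTrade {μ r n : ℕ} (T : Fin μ → Fin r → Fin n → Option ℕ) : Prop :=
  (∀ m, IsPartialLatinRect (T m)) ∧
  (∀ m m' i j, (T m i j).isSome → (T m' i j).isSome) ∧
  (∀ m m' i j, m ≠ m' → (T m i j).isSome → T m i j ≠ T m' i j) ∧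
  (∀ m m' i, {s | ∃ j, T m i j = some s} = {s | ∃ j, T m' i j = some s}) ∧
  (∀ m m' j, {s | ∃ i, T m i j = some s} = {s | ∃ i, T m' i j = some s})

/-- The set `R i` of symbols appearing in row `i` (common to all μ rectangles). -/
def rowSet {μ r n : ℕ} (T : Fin μ → Fin r → Fin n → Option ℕ) (i : Fin r) : Set ℕ :=
  {s | ∃ m j, T m i j = some s}

/-- The set `C j` of symbols appearing in column `j` (common to all μ rectangles). -/
def colSet {μ r n : ℕ} (T : Fin μ → Fin r → Fin n → Option ℕ) (j : Fin n) : Set ℕ :=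
  {s | ∃ m i, T m i j = some s}

/-- The volume of a trade: the number of filled cells. -/
def tradeVolume {μ r n : ℕ} (T : Fin μ → Fin r → Fin n → Option ℕ) : ℕ :=
  (Finset.univ.filter fun p : Fin r × Fin n => ∃ m, (T m p.1 p.2).isSome).card

/-!
A filled cell `(i, j)` carries `μ` pairwise distinct symbols, all in `R i` and in `C j`; when
`|R i| = μ` they exhaust `R i`, so `R i ⊆ C j`. A symbol `x` of `C j` lying in neither row
`i₁` nor `i₂` would occupy `μ` distinct cells of column `j` besides `(i₁, j)` and `(i₂, j)`,
whereas column `j` of each rectangle has exactly `|C j| = μ + 1` filled cells. Hence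
`R i₁ ∪ R i₂ = C j`, and inclusion–exclusion gives `|R i₁ ∩ R i₂| = μ - 1`.
-/

theorem IsPartialLatinRect.ncard_filled_col_eq {r n : ℕ} {f : Fin r → Fin n → Option ℕ}
    (hf : IsPartialLatinRect f) (j : Fin n) :
    {i | (f i j).isSome}.ncard = {s | ∃ i, f i j = some s}.ncard :=
  Set.ncard_congr (fun i hi => (f i j).get hi) (fun i _ => ⟨i, by simp⟩)
    (fun _ _ ha hb hab => hf.2 _ _ j _ (Option.some_get ha).symm (by rw [hab, Option.some_get]))
    (fun _ ⟨i, hi⟩ => ⟨i, by simp [hi], by simp [hi]⟩)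

namespace IsMuWayLatinTrade

variable {μ r n : ℕ} {T : Fin μ → Fin r → Fin n → Option ℕ}

theorem colSet_eq (hT : IsMuWayLatinTrade T) (m : Fin μ) (j : Fin n) :
    colSet T j = {s | ∃ i, T m i j = some s} := by
  ext s
  refine ⟨fun ⟨m', i, hi⟩ => ?_, fun ⟨i, hi⟩ => ⟨m, i, hi⟩⟩
  rw [hT.2.2.2.2 m m' j]
  exact ⟨i, hi⟩

theorem exists_injective_cell_entries (hT : IsMuWayLatinTrade T) {i : Fin r} {j : Fin n}
    (h : ∃ m, (T m i j).isSome) :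
    ∃ v : Fin μ → ℕ, Function.Injective v ∧ ∀ m, T m i j = some (v m) := by
  obtain ⟨m₀, hm₀⟩ := h
  choose v hv using fun m => Option.isSome_iff_exists.mp (hT.2.1 m₀ m i j hm₀)
  refine ⟨v, fun m m' hvm => ?_, hv⟩
  by_contra hne
  exact hT.2.2.1 m m' i j hne (by simp [hv]) (by rw [hv, hv, hvm])

theorem exists_injective_rows_of_mem_colSet (hT : IsMuWayLatinTrade T) {j : Fin n} {x : ℕ}
    (hx : x ∈ colSet T j) :
    ∃ g : Fin μ → Fin r, Function.Injective g ∧ ∀ m, T m (g m) j = some x := by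
  choose g hg using fun m => (hT.colSet_eq m j ▸ hx : x ∈ {s | ∃ i, T m i j = some s})
  refine ⟨g, fun m m' hgm => ?_, hg⟩
  by_contra hne
  exact hT.2.2.1 m m' (g m) j hne (by simp [hg]) (by rw [hg, hgm, hg])

theorem rowSet_subset_colSet (hT : IsMuWayLatinTrade T) {i : Fin r} {j : Fin n}
    (h : ∃ m, (T m i j).isSome) (hR : (rowSet T i).ncard = μ) :
    rowSet T i ⊆ colSet T j := by
  obtain ⟨v, hv_inj, hv⟩ := hT.exists_injective_cell_entries h
  have hRfin : (rowSet T i).Finite :=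
    Set.finite_of_ncard_ne_zero (hR.symm ▸ h.choose.pos.ne')
  have hrange : Set.range v = rowSet T i :=
    Set.eq_of_subset_of_ncard_le (Set.range_subset_iff.mpr fun m => ⟨m, j, hv m⟩)
      (by rw [hR, Set.ncard_range_of_injective hv_inj, Nat.card_eq_fintype_card,
        Fintype.card_fin]) hRfin
  rw [← hrange]
  exact Set.range_subset_iff.mpr fun m => ⟨m, i, hv m⟩

theorem mem_rowSet_union_of_mem_colSet (hT : IsMuWayLatinTrade T) {i₁ i₂ : Fin r} {j : Fin n}
    (hne : i₁ ≠ i₂) (h1 : ∃ m, (T m i₁ j).isSome) (h2 : ∃ m, (T m i₂ j).isSome)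
    (hC : (colSet T j).ncard = μ + 1) {x : ℕ} (hx : x ∈ colSet T j) :
    x ∈ rowSet T i₁ ∪ rowSet T i₂ := by
  by_contra hxU
  obtain ⟨m₀, hm₀⟩ := h1
  obtain ⟨g, hg_inj, hg⟩ := hT.exists_injective_rows_of_mem_colSet hx
  have hg_ne : ∀ m, g m ≠ i₁ ∧ g m ≠ i₂ := fun m =>
    ⟨fun h => hxU (.inl ⟨m, j, h ▸ hg m⟩), fun h => hxU (.inr ⟨m, j, h ▸ hg m⟩)⟩
  set S := insert i₁ (insert i₂ (Finset.univ.image g))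
  have hS_card : S.card = μ + 2 := by
    rw [Finset.card_insert_of_notMem (by simpa [hne] using fun m => (hg_ne m).1),
      Finset.card_insert_of_notMem (by simpa using fun m => (hg_ne m).2),
      Finset.card_image_of_injective _ hg_inj, Finset.card_univ, Fintype.card_fin]
  have hS_filled : (S : Set (Fin r)) ⊆ {i | (T m₀ i j).isSome} := by
    intro i hi
    simp only [S, Finset.coe_insert, Finset.coe_image, Finset.coe_univ, Set.image_univ,
      Set.mem_insert_iff, Set.mem_range] at hi
    rcases hi with rfl | rfl | ⟨m, rfl⟩
    · exact hm₀
    · exact hT.2.1 _ m₀ i j h2.choose_spec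
    · exact hT.2.1 m m₀ (g m) j (by simp [hg])
  have hcount := Set.ncard_le_ncard hS_filled
  rw [Set.ncard_coe_finset, hS_card, (hT.1 m₀).ncard_filled_col_eq, ← hT.colSet_eq, hC] at hcount
  omega

end IsMuWayLatinTrade

theorem stmt_2 {μ r n : ℕ} (T : Fin μ → Fin r → Fin n → Option ℕ)
    (hT : IsMuWayLatinTrade T) (i₁ i₂ : Fin r) (j : Fin n) (hne : i₁ ≠ i₂)
    (h1 : ∃ m, (T m i₁ j).isSome) (h2 : ∃ m, (T m i₂ j).isSome)
    (hC : (colSet T j).ncard = μ + 1)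
    (hR1 : (rowSet T i₁).ncard = μ) (hR2 : (rowSet T i₂).ncard = μ) :
    rowSet T i₁ ∪ rowSet T i₂ = colSet T j ∧
      (rowSet T i₁ ∩ rowSet T i₂).ncard = μ - 1 := by
  have hsub1 := hT.rowSet_subset_colSet h1 hR1
  have hsub2 := hT.rowSet_subset_colSet h2 hR2
  have hunion : rowSet T i₁ ∪ rowSet T i₂ = colSet T j :=
    (Set.union_subset hsub1 hsub2).antisymm
      fun _ hx => hT.mem_rowSet_union_of_mem_colSet hne h1 h2 hC hx
  have hCfin : (colSet T j).Finite := Set.finite_of_ncard_ne_zero (by omega)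
  have hincl_excl := Set.ncard_union_add_ncard_inter _ _ (hCfin.subset hsub1) (hCfin.subset hsub2)
  rw [hunion, hC, hR1, hR2] at hincl_excl
  exact ⟨hunion, by omega⟩
end

section
/- Let L be a μ-way latin square of order n. If a symbol appears at least n − μ + 1 times among the fixed (identical) cells of L, then that symbol appears only in fixed cells, i.e., it never occurs in the trade part of L. -/
/-- A μ-way latin square of order n: μ latin squares on symbols `Fin n` such that
in every cell the μ entries are all equal or pairwise distinct. -/
def IsMuWayLatinSquare {μ n : ℕ} (L : Fin μ → Fin n → Fin n → Fin n) : Prop :=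
  (∀ m i, Function.Injective (L m i)) ∧
  (∀ m j, Function.Injective (fun i => L m i j)) ∧
  (∀ i j, (∀ a b, L a i j = L b i j) ∨ Function.Injective (fun a => L a i j))

/-- A cell is fixed when the μ entries there coincide. -/
def IsFixedCell {μ n : ℕ} (L : Fin μ → Fin n → Fin n → Fin n) (i j : Fin n) : Prop :=
  ∀ a b, L a i j = L b i j

instance {μ n : ℕ} (L : Fin μ → Fin n → Fin n → Fin n) (i j : Fin n) :
    Decidable (IsFixedCell L i j) :=
  inferInstanceAs (Decidable (∀ a b, L a i j = L b i j))

/-- The number of fixed cells. -/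
def numFixed {μ n : ℕ} (L : Fin μ → Fin n → Fin n → Fin n) : ℕ :=
  (Finset.univ.filter fun p : Fin n × Fin n => IsFixedCell L p.1 p.2).card

/-- The number of fixed cells in row `i`. -/
def rowFixed {μ n : ℕ} (L : Fin μ → Fin n → Fin n → Fin n) (i : Fin n) : ℕ :=
  (Finset.univ.filter fun j : Fin n => IsFixedCell L i j).card

/-- The intersection spectrum `I^μ[n]`. -/
def Spectrum (μ n : ℕ) : Set ℕ :=
  {k | ∃ L : Fin μ → Fin n → Fin n → Fin n, IsMuWayLatinSquare L ∧ numFixed L = k}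

theorem stmt_3 {μ n : ℕ} (L : Fin μ → Fin n → Fin n → Fin n)
    (hL : IsMuWayLatinSquare L) (x : Fin n)
    (hx : n - μ + 1 ≤
      (Finset.univ.filter fun p : Fin n × Fin n => ∀ a, L a p.1 p.2 = x).card) :
    ∀ (a : Fin μ) (i j : Fin n), L a i j = x → IsFixedCell L i j := by
  classical
  intro a i j haij
  by_contra hfix
  obtain ⟨hrow, hcol, hcell⟩ := hL
  -- for each copy b, the row where x occurs in column j
  have hsurj : ∀ b : Fin μ, ∃ r, L b r j = x := fun b =>
    Finite.injective_iff_surjective.mp (hcol b j) x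
  choose f hf using hsurj
  have hfixf : ∀ b, ¬ IsFixedCell L (f b) j := by
    intro b hfb
    have h1 : L a (f b) j = x := (hfb a b).trans (hf b)
    have h2 : f b = i := hcol a j (h1.trans haij.symm)
    exact hfix (h2 ▸ hfb)
  have hinjf : Function.Injective f := by
    intro b c hbc
    have hne := (hcell (f b) j).resolve_left (hfixf b)
    apply hne
    show L b (f b) j = L c (f b) j
    rw [hf b, hbc, hf c]
  have hμn : μ ≤ n := by
    simpa using Fintype.card_le_of_injective f hinjf
  set S := Finset.univ.filter fun p : Fin n × Fin n => ∀ a, L a p.1 p.2 = x with hS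
  set T := S.image Prod.fst with hT
  set R := (Finset.univ : Finset (Fin μ)).image f with hR
  have hTcard : T.card = S.card := by
    apply Finset.card_image_of_injOn
    intro p hp q hq hpq
    simp only [hS, Finset.coe_filter, Set.mem_setOf_eq] at hp hq
    have : p.2 = q.2 := by
      rcases Fin.pos_iff_nonempty.mp a.pos with ⟨a0⟩
      exact hrow a p.1 ((hp.2 a).trans (hpq ▸ (hq.2 a).symm))
    exact Prod.ext hpq this
  have hRcard : R.card = μ := by
    rw [hR, Finset.card_image_of_injective _ hinjf]
    simp
  have hdisj : Disjoint T R := by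
    rw [Finset.disjoint_left]
    intro r hrT hrR
    simp only [hT, hR, Finset.mem_image, hS, Finset.mem_filter] at hrT hrR
    obtain ⟨p, ⟨-, hpx⟩, hp1⟩ := hrT
    obtain ⟨b, -, hb⟩ := hrR
    -- in copy b row r, x occurs at p.2 and at j
    have h1 : L b r p.2 = x := hp1 ▸ hpx b
    have h2 : L b r j = x := hb ▸ hf b
    have hj : p.2 = j := hrow b r (h1.trans h2.symm)
    apply hfixf b
    intro a' b'
    rw [hb]
    have := hp1 ▸ hj ▸ hpx
    rw [this a', this b']
  have hcards : T.card + R.card ≤ n := by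
    have := Finset.card_union_of_disjoint hdisj ▸
      Finset.card_le_card (Finset.subset_univ (T ∪ R))
    simpa using this
  rw [hTcard, hRcard] at hcards
  omega
end

section
/- Let L be a μ-way latin square of order n with exactly k fixed cells, and let p be the number of symbols that appear only in fixed cells of L. Then p ≥ ⌈n − (n² − k)/μ⌉. -/
open Finset

/-! Fix a square `c`. A symbol `x` that occurs in a non-fixed cell `(i, j)` occurs in row `i` of
every square `b`, at columns `col b` that are pairwise distinct (the cells `(i, col b)` are
non-fixed, so their entries are pairwise distinct); in square `c` it then occurs in each column
`col b` in a non-fixed cell. So each such symbol fills at least `μ` of the `n² - k` non-fixed cells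
of square `c`, whence `μ (n - p) ≤ n² - k`. -/

variable {μ n : ℕ} {L : Fin μ → Fin n → Fin n → Fin n}

def nonFixedCells (L : Fin μ → Fin n → Fin n → Fin n) : Finset (Fin n × Fin n) :=
  univ.filter fun q => ¬ IsFixedCell L q.1 q.2

def fixedOnlySymbols (L : Fin μ → Fin n → Fin n → Fin n) : Finset (Fin n) :=
  univ.filter fun x => ∀ (a : Fin μ) (i j : Fin n), L a i j = x → IsFixedCell L i j

theorem card_nonFixedCells (L : Fin μ → Fin n → Fin n → Fin n) :
    (nonFixedCells L).card = n ^ 2 - numFixed L := by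
  rw [nonFixedCells, filter_not, card_sdiff_of_subset (filter_subset _ _)]
  simp [numFixed, sq]

theorem fixedOnlySymbols_eq_univ_of_zero (L : Fin 0 → Fin n → Fin n → Fin n) :
    fixedOnlySymbols L = univ := by
  ext x
  simp [fixedOnlySymbols]

namespace IsMuWayLatinSquare

theorem injective_of_not_isFixedCell (hL : IsMuWayLatinSquare L) {i j : Fin n}
    (h : ¬ IsFixedCell L i j) : Function.Injective fun a => L a i j :=
  (hL.2.2 i j).resolve_left h

theorem not_isFixedCell_of_eq_row (hL : IsMuWayLatinSquare L) {a b : Fin μ} {i j j' : Fin n}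
    (hj : ¬ IsFixedCell L i j) (h : L a i j = L b i j') : ¬ IsFixedCell L i j' := by
  intro hfix
  obtain rfl := hL.1 a i (h.trans (hfix b a))
  exact hj hfix

theorem not_isFixedCell_of_eq_col (hL : IsMuWayLatinSquare L) {a b : Fin μ} {i i' j : Fin n}
    (hi : ¬ IsFixedCell L i j) (h : L a i j = L b i' j) : ¬ IsFixedCell L i' j := by
  intro hfix
  obtain rfl := hL.2.1 a j (h.trans (hfix b a))
  exact hi hfix

theorem le_card_nonFixedCells_filter (hL : IsMuWayLatinSquare L) (c : Fin μ) {x : Fin n}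
    (hx : x ∉ fixedOnlySymbols L) :
    μ ≤ ((nonFixedCells L).filter fun q => L c q.1 q.2 = x).card := by
  simp only [fixedOnlySymbols, mem_filter, mem_univ, true_and, not_forall, exists_prop] at hx
  obtain ⟨a, i, j, hax, hij⟩ := hx
  choose col hcol using fun b => Finite.surjective_of_injective (hL.1 b i) x
  choose row hrow using fun b => Finite.surjective_of_injective (hL.2.1 c (col b)) x
  have hcol_nonFixed b : ¬ IsFixedCell L i (col b) :=
    hL.not_isFixedCell_of_eq_row hij (hax.trans (hcol b).symm)
  have hrow_nonFixed b : ¬ IsFixedCell L (row b) (col b) :=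
    hL.not_isFixedCell_of_eq_col (hcol_nonFixed b) ((hcol b).trans (hrow b).symm)
  have hcol_inj : Function.Injective col := fun b b' h =>
    hL.injective_of_not_isFixedCell (hcol_nonFixed b) ((hcol b).trans (h ▸ hcol b').symm)
  simpa using card_le_card_of_injOn (s := univ) (fun b => (row b, col b))
    (fun b _ => by simp [nonFixedCells, hrow_nonFixed b, hrow b])
    (fun b _ b' _ h => hcol_inj (congrArg Prod.snd h))

theorem mul_card_compl_fixedOnlySymbols_le (hL : IsMuWayLatinSquare L) :
    μ * (fixedOnlySymbols L)ᶜ.card ≤ (nonFixedCells L).card := by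
  rcases Nat.eq_zero_or_pos μ with rfl | hμ
  · simp
  let c : Fin μ := ⟨0, hμ⟩
  calc μ * (fixedOnlySymbols L)ᶜ.card = ∑ _x ∈ (fixedOnlySymbols L)ᶜ, μ := by
        rw [sum_const, smul_eq_mul, mul_comm]
    _ ≤ ∑ x ∈ (fixedOnlySymbols L)ᶜ, ((nonFixedCells L).filter fun q => L c q.1 q.2 = x).card :=
        sum_le_sum fun x hx => hL.le_card_nonFixedCells_filter c (mem_compl.1 hx)
    _ ≤ ∑ x, ((nonFixedCells L).filter fun q => L c q.1 q.2 = x).card :=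
        sum_le_sum_of_subset (subset_univ _)
    _ = (nonFixedCells L).card := (card_eq_sum_card_fiberwise fun _ _ => mem_univ _).symm

end IsMuWayLatinSquare

theorem stmt_4 {μ n k : ℕ} (L : Fin μ → Fin n → Fin n → Fin n)
    (hL : IsMuWayLatinSquare L) (hk : numFixed L = k)
    (p : ℕ)
    (hp : p = (Finset.univ.filter fun x : Fin n =>
      ∀ (a : Fin μ) (i j : Fin n), L a i j = x → IsFixedCell L i j).card) :
    ⌈(n : ℚ) - ((n ^ 2 - k : ℕ) : ℚ) / (μ : ℚ)⌉ ≤ (p : ℤ) := by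
  change p = (fixedOnlySymbols L).card at hp
  subst hp hk
  rw [Int.ceil_le, ← card_nonFixedCells]
  rcases Nat.eq_zero_or_pos μ with rfl | hμ
  · -- `x / 0 = 0`, and with no squares every symbol is vacuously fixed-only
    simp [fixedOnlySymbols_eq_univ_of_zero]
  have hbound := hL.mul_card_compl_fixedOnlySymbols_le
  have hp_le : (fixedOnlySymbols L).card ≤ n := (card_le_univ _).trans_eq (Fintype.card_fin n)
  rw [card_compl, Fintype.card_fin] at hbound
  qify [hp_le] at hbound
  push_cast
  rw [sub_le_comm, le_div_iff₀ (by positivity)]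
  linarith
end

section
/- In a 4-way latin square of order 7, no two rows can have exactly 7 and exactly 3 fixed cells respectively. Equivalently, if some row consists entirely of fixed cells, then no other row has exactly 3 fixed cells. -/
theorem stmt_5 (L : Fin 4 → Fin 7 → Fin 7 → Fin 7)
    (hL : IsMuWayLatinSquare L) (i₁ i₂ : Fin 7) (hne : i₁ ≠ i₂) :
    ¬ (rowFixed L i₁ = 7 ∧ rowFixed L i₂ = 3) := by
  rintro ⟨h1, h2⟩
  obtain ⟨hrow, hcol, hdich⟩ := hL
  -- every cell in row i₁ is fixed
  have hfix1 : ∀ j, IsFixedCell L i₁ j := by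
    have huniv : (Finset.univ.filter fun j : Fin 7 => IsFixedCell L i₁ j) = Finset.univ := by
      apply Finset.eq_univ_of_card
      simpa [rowFixed] using h1
    intro j
    have : j ∈ Finset.univ.filter fun j : Fin 7 => IsFixedCell L i₁ j := by
      rw [huniv]; exact Finset.mem_univ j
    exact (Finset.mem_filter.mp this).2
  set F : Finset (Fin 7) := Finset.univ.filter fun j : Fin 7 => IsFixedCell L i₂ j with hF
  have hFcard : F.card = 3 := h2
  set S : Finset (Fin 7) := F.image (L 0 i₂) with hS
  have hScard : S.card = 3 := by
    rw [hS, Finset.card_image_of_injective _ (hrow 0 i₂), hFcard]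
  -- non-fixed columns avoid S
  have hA : ∀ j, j ∉ F → ∀ a, L a i₂ j ∉ S := by
    intro j hj a hmem
    obtain ⟨j', hj'F, hj'⟩ := Finset.mem_image.mp hmem
    have hfix : IsFixedCell L i₂ j' := (Finset.mem_filter.mp hj'F).2
    have : L a i₂ j' = L a i₂ j := by rw [hfix a 0, hj']
    have : j' = j := hrow a i₂ this
    apply hj
    rw [← this]; exact hj'F
  -- non-fixed columns: the four entries are injective
  have hB : ∀ j, j ∉ F → Function.Injective (fun a => L a i₂ j) := by
    intro j hj
    rcases hdich i₂ j with h | h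
    · exact absurd (Finset.mem_filter.mpr ⟨Finset.mem_univ j, h⟩) hj
    · exact h
  -- key: for non-fixed j, L 0 i₁ j ∈ S
  have hC : ∀ j, j ∉ F → L 0 i₁ j ∈ S := by
    intro j hj
    set Img : Finset (Fin 7) := Finset.univ.image (fun a : Fin 4 => L a i₂ j) with hImg
    have hImgcard : Img.card = 4 := by
      rw [hImg, Finset.card_image_of_injective _ (hB j hj)]
      simp
    have hsub : Img ⊆ Sᶜ := by
      intro x hx
      obtain ⟨a, _, ha⟩ := Finset.mem_image.mp hx
      rw [Finset.mem_compl, ← ha]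
      exact hA j hj a
    have hSc : Sᶜ.card = 4 := by
      rw [Finset.card_compl, hScard]; rfl
    have hEq : Img = Sᶜ := Finset.eq_of_subset_of_card_le hsub (by omega)
    by_contra hnot
    have : L 0 i₁ j ∈ Img := by
      rw [hEq, Finset.mem_compl]; exact hnot
    obtain ⟨a, _, ha⟩ := Finset.mem_image.mp this
    have heq : L a i₂ j = L a i₁ j := by rw [ha, hfix1 j 0 a]
    exact hne (hcol a j heq).symm
  -- now count: Fᶜ has 4 elements, maps injectively into S of size 3
  have hNcard : Fᶜ.card = 4 := by
    rw [Finset.card_compl, hFcard]; rfl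
  have hinj : Set.InjOn (L 0 i₁) (Fᶜ : Finset (Fin 7)) := fun x _ y _ h => hrow 0 i₁ h
  have hmaps : ∀ j ∈ Fᶜ, L 0 i₁ j ∈ S := fun j hj => hC j (Finset.mem_compl.mp hj)
  have := Finset.card_le_card_of_injOn (L 0 i₁) hmaps hinj
  omega
end

section
/- In a 4-way latin square of order 7, it is impossible that two rows consist entirely of fixed cells (7 fixed cells each) while a third row has exactly 2 fixed cells. -/
/-!
Let `T` be the set of the `f` symbols in the fixed cells of row `i₃`. In a non-fixed column `j`
of row `i₃` the `μ` entries are pairwise distinct, avoid `T` (each square's row is a permutation)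
and avoid the entries `a_j`, `b_j` of the two fully fixed rows in that column. Hence if
`μ + f + 2 > n`, one of `a_j`, `b_j` lies in `T` for each of the `n - f` non-fixed columns; as
the fixed rows are permutations, each meets `T` in at most `f` columns, so `n - f ≤ 2 f`.
For `n = 7`, `μ = 4`, `f = 2` this fails.
-/

open Finset Function

theorem card_le_two_mul_card_of_forall_mem_or_mem {ι κ : Type*} [DecidableEq ι] [DecidableEq κ]
    {f g : ι → κ} (hf : Injective f) (hg : Injective g) {J : Finset ι} {T : Finset κ}
    (h : ∀ j ∈ J, f j ∈ T ∨ g j ∈ T) : #J ≤ 2 * #T := by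
  have hle : ∀ {u : ι → κ}, Injective u → #(J.filter fun j => u j ∈ T) ≤ #T := fun hu =>
    card_le_card_of_injOn _ (fun j hj => (mem_filter.mp hj).2) hu.injOn
  calc #J ≤ #((J.filter fun j => f j ∈ T) ∪ J.filter fun j => g j ∈ T) := by
        refine card_le_card fun j hj => ?_
        rcases h j hj with hfj | hgj
        · exact mem_union_left _ (mem_filter.mpr ⟨hj, hfj⟩)
        · exact mem_union_right _ (mem_filter.mpr ⟨hj, hgj⟩)
    _ ≤ #(J.filter fun j => f j ∈ T) + #(J.filter fun j => g j ∈ T) := card_union_le _ _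
    _ ≤ 2 * #T := by linarith [hle hf, hle hg]

variable {μ n : ℕ} {L : Fin μ → Fin n → Fin n → Fin n}

theorem rowFixed_eq_iff {i : Fin n} : rowFixed L i = n ↔ ∀ j, IsFixedCell L i j := by
  simpa [rowFixed] using card_filter_eq_iff (s := univ) (p := fun j => IsFixedCell L i j)

def fixedSymbols [NeZero μ] (L : Fin μ → Fin n → Fin n → Fin n) (i : Fin n) : Finset (Fin n) :=
  (univ.filter fun j => IsFixedCell L i j).image (L 0 i)

namespace IsMuWayLatinSquare

variable (hL : IsMuWayLatinSquare L)
include hL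

theorem card_fixedSymbols [NeZero μ] (i : Fin n) : #(fixedSymbols L i) = rowFixed L i :=
  card_image_of_injective _ (hL.1 0 i)

theorem apply_mem_fixedSymbols_iff [NeZero μ] {m : Fin μ} {i j : Fin n} :
    L m i j ∈ fixedSymbols L i ↔ IsFixedCell L i j := by
  simp only [fixedSymbols, mem_image, mem_filter, mem_univ, true_and]
  constructor
  · rintro ⟨j', hj', hL0⟩
    rwa [← hL.1 m i (by rw [← hj' 0 m, hL0] : L m i j' = L m i j)]
  · exact fun hj => ⟨j, hj, hj 0 m⟩

theorem apply_ne_of_isFixedCell {m m' : Fin μ} {i i' j : Fin n} (hi : i ≠ i')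
    (hfix : IsFixedCell L i' j) : L m i j ≠ L m' i' j := fun h =>
  hi (hL.2.1 m j (h.trans (hfix m' m)))

theorem add_rowFixed_add_two_le [NeZero μ] {i₁ i₂ i₃ j : Fin n}
    (h12 : i₁ ≠ i₂) (h13 : i₁ ≠ i₃) (h23 : i₂ ≠ i₃)
    (hfix₁ : IsFixedCell L i₁ j) (hfix₂ : IsFixedCell L i₂ j) (hj : ¬ IsFixedCell L i₃ j)
    (ha : L 0 i₁ j ∉ fixedSymbols L i₃) (hb : L 0 i₂ j ∉ fixedSymbols L i₃) :
    μ + rowFixed L i₃ + 2 ≤ n := by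
  set A := insert (L 0 i₁ j) (insert (L 0 i₂ j) (fixedSymbols L i₃))
  have hA : #A = rowFixed L i₃ + 2 := by
    have hab : L 0 i₁ j ≠ L 0 i₂ j := hL.apply_ne_of_isFixedCell h12 hfix₂
    rw [card_insert_of_notMem (by simp [hab, ha]), card_insert_of_notMem hb,
      hL.card_fixedSymbols]
  have hinj : Injective fun m => L m i₃ j := (hL.2.2 i₃ j).resolve_left hj
  have hmaps : ∀ m, L m i₃ j ∈ Aᶜ := fun m => by
    simp only [mem_compl, A, mem_insert, not_or]
    exact ⟨hL.apply_ne_of_isFixedCell h13.symm hfix₁, hL.apply_ne_of_isFixedCell h23.symm hfix₂,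
      fun h => hj (hL.apply_mem_fixedSymbols_iff.mp h)⟩
  have hμ : μ ≤ #Aᶜ := by
    simpa using card_le_card_of_injOn (s := univ) _ (fun m _ => hmaps m) hinj.injOn
  rw [card_compl, Fintype.card_fin, hA] at hμ
  have : #A ≤ n := by simpa using card_le_univ A
  omega

theorem le_three_mul_rowFixed [NeZero μ] {i₁ i₂ i₃ : Fin n}
    (h12 : i₁ ≠ i₂) (h13 : i₁ ≠ i₃) (h23 : i₂ ≠ i₃)
    (h₁ : rowFixed L i₁ = n) (h₂ : rowFixed L i₂ = n) (hμ : n < μ + rowFixed L i₃ + 2) :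
    n ≤ 3 * rowFixed L i₃ := by
  set J := univ.filter fun j => ¬ IsFixedCell L i₃ j
  have hJ : #J + rowFixed L i₃ = n := by
    simpa [rowFixed, J, add_comm] using
      card_filter_add_card_filter_not (s := univ) (p := fun j => IsFixedCell L i₃ j)
  have hcover : ∀ j ∈ J, L 0 i₁ j ∈ fixedSymbols L i₃ ∨ L 0 i₂ j ∈ fixedSymbols L i₃ := by
    intro j hj
    by_contra! hout
    have := hL.add_rowFixed_add_two_le h12 h13 h23 (rowFixed_eq_iff.mp h₁ j)
      (rowFixed_eq_iff.mp h₂ j) (mem_filter.mp hj).2 hout.1 hout.2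
    omega
  have := card_le_two_mul_card_of_forall_mem_or_mem (hL.1 0 i₁) (hL.1 0 i₂) hcover
  rw [hL.card_fixedSymbols] at this
  omega

end IsMuWayLatinSquare

theorem stmt_6 (L : Fin 4 → Fin 7 → Fin 7 → Fin 7)
    (hL : IsMuWayLatinSquare L) (i₁ i₂ i₃ : Fin 7)
    (h12 : i₁ ≠ i₂) (h13 : i₁ ≠ i₃) (h23 : i₂ ≠ i₃) :
    ¬ (rowFixed L i₁ = 7 ∧ rowFixed L i₂ = 7 ∧ rowFixed L i₃ = 2) := by
  rintro ⟨h₁, h₂, h₃⟩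
  have := hL.le_three_mul_rowFixed h12 h13 h23 h₁ h₂ (by omega)
  omega
end

section
/- In a 4-way latin square of order 6, no row can consist entirely of fixed cells while another row has exactly 2 fixed cells. -/
theorem stmt_7 (L : Fin 4 → Fin 6 → Fin 6 → Fin 6)
    (hL : IsMuWayLatinSquare L) (i₁ i₂ : Fin 6) (hne : i₁ ≠ i₂) :
    ¬ (rowFixed L i₁ = 6 ∧ rowFixed L i₂ = 2) := by
  rintro ⟨h1, h2⟩
  obtain ⟨hrow, hcol, hcell⟩ := hL
  -- every cell of row i₁ is fixed
  have hfix1 : ∀ j, IsFixedCell L i₁ j := by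
    intro j
    have huniv : (Finset.univ.filter fun j : Fin 6 => IsFixedCell L i₁ j) = Finset.univ := by
      apply Finset.eq_univ_of_card
      simpa [rowFixed] using h1
    have := Finset.eq_univ_iff_forall.mp huniv j
    exact (Finset.mem_filter.mp this).2
  -- the two fixed columns of row i₂
  obtain ⟨j₁, j₂, hjne, hF⟩ := Finset.card_eq_two.mp (by simpa [rowFixed] using h2)
  have hfix2a : IsFixedCell L i₂ j₁ := by
    have : j₁ ∈ Finset.univ.filter fun j : Fin 6 => IsFixedCell L i₂ j := by
      rw [hF]; simp
    exact (Finset.mem_filter.mp this).2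
  have hfix2b : IsFixedCell L i₂ j₂ := by
    have : j₂ ∈ Finset.univ.filter fun j : Fin 6 => IsFixedCell L i₂ j := by
      rw [hF]; simp
    exact (Finset.mem_filter.mp this).2
  have ht : L 0 i₂ j₁ ≠ L 0 i₂ j₂ := fun h => hjne (hrow 0 i₂ h)
  -- key claim: at a non-fixed column j, σ(j) lies in {t₁, t₂}
  have key : ∀ j, ¬ IsFixedCell L i₂ j →
      L 0 i₁ j = L 0 i₂ j₁ ∨ L 0 i₁ j = L 0 i₂ j₂ := by
    intro j hj
    by_contra hc
    push_neg at hc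
    obtain ⟨hc1, hc2⟩ := hc
    have hinj : Function.Injective fun a => L a i₂ j := (hcell i₂ j).resolve_left hj
    have hsub : (Finset.univ.image fun a : Fin 4 => L a i₂ j) ⊆
        (Finset.univ : Finset (Fin 6)) \ {L 0 i₁ j, L 0 i₂ j₁, L 0 i₂ j₂} := by
      intro x hx
      simp only [Finset.mem_image, Finset.mem_univ, true_and] at hx
      obtain ⟨a, rfl⟩ := hx
      simp only [Finset.mem_sdiff, Finset.mem_univ, true_and, Finset.mem_insert,
        Finset.mem_singleton, not_or]
      refine ⟨?_, ?_, ?_⟩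
      · intro h
        have : L a i₂ j = L a i₁ j := by rw [h, hfix1 j 0 a]
        exact hne (hcol a j this).symm
      · intro h
        have : L a i₂ j = L a i₂ j₁ := by rw [h, hfix2a 0 a]
        exact hj ((hrow a i₂ this) ▸ hfix2a)
      · intro h
        have : L a i₂ j = L a i₂ j₂ := by rw [h, hfix2b 0 a]
        exact hj ((hrow a i₂ this) ▸ hfix2b)
    have hcard1 : (Finset.univ.image fun a : Fin 4 => L a i₂ j).card = 4 := by
      rw [Finset.card_image_of_injective _ hinj]; simp
    have hcard3 : ({L 0 i₁ j, L 0 i₂ j₁, L 0 i₂ j₂} : Finset (Fin 6)).card = 3 := by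
      rw [Finset.card_insert_of_notMem (by simp [hc1, hc2]),
        Finset.card_insert_of_notMem (by simp [ht]), Finset.card_singleton]
    have hcard2 : ((Finset.univ : Finset (Fin 6)) \
        {L 0 i₁ j, L 0 i₂ j₁, L 0 i₂ j₂}).card = 3 := by
      rw [Finset.card_sdiff_of_subset (Finset.subset_univ _), hcard3]
      simp
    have := Finset.card_le_card hsub
    omega
  -- the non-fixed columns of row i₂
  set N := Finset.univ.filter fun j : Fin 6 => ¬ IsFixedCell L i₂ j with hN
  have hNcard : N.card = 4 := by
    have : N = Finset.univ \ (Finset.univ.filter fun j : Fin 6 => IsFixedCell L i₂ j) := by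
      rw [hN, Finset.filter_not]
    rw [this, Finset.card_sdiff_of_subset (Finset.filter_subset _ _)]
    have : (Finset.univ.filter fun j : Fin 6 => IsFixedCell L i₂ j).card = 2 := by
      simpa [rowFixed] using h2
    rw [this]
    simp
  have himg : N.image (fun j => L 0 i₁ j) ⊆ ({L 0 i₂ j₁, L 0 i₂ j₂} : Finset (Fin 6)) := by
    intro x hx
    simp only [Finset.mem_image] at hx
    obtain ⟨j, hj, rfl⟩ := hx
    have hj' := (Finset.mem_filter.mp hj).2
    rcases key j hj' with h | h <;> simp [h]
  have hicard : (N.image fun j => L 0 i₁ j).card = 4 := by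
    rw [Finset.card_image_of_injective _ (hrow 0 i₁), hNcard]
  have hle := Finset.card_le_card himg
  have : ({L 0 i₂ j₁, L 0 i₂ j₂} : Finset (Fin 6)).card ≤ 2 :=
    (Finset.card_insert_le _ _).trans (by simp)
  omega
end

section
/- For every n ≥ 1 and μ ≥ 2, the intersection set satisfies I^μ[2n] ⊇ (I^μ[n] + I^μ[n] + I^μ[n] + I^μ[n]) ∪ ⋃_{i=1}^{n} (I^μ[i] + {(2n)² − i²}), where sums of sets are setwise sums. -/
open Finset Function

/-!
In both constructions the layers of the new square agree wherever it is not copied from a given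
μ-way latin square, so all those cells are fixed. Four μ-way latin squares of order `n` are the
blocks of the inflation of the addition table of `Fin 2` (a μ-way latin square of order `2n`).
A μ-way latin square of order `i ≤ n` is written, in every layer, over the top-left corner of a
latin square of order `2n` whose `i × i` corner is a latin subsquare. Such a square exists: the
`i × 2n` rectangle made of a cyclic square on the first `i` symbols and a cyclic shift of the
remaining ones completes row by row by Hall's theorem, since in a `k × N` latin rectangle every
column misses `N - k` symbols and every symbol is missed by `N - k` columns.
-/

lemma numFixed_eq_sum {μ n : ℕ} (L : Fin μ → Fin n → Fin n → Fin n) :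
    numFixed L = ∑ r, ∑ c, if IsFixedCell L r c then 1 else 0 := by
  rw [numFixed, card_filter, Fintype.sum_prod_type]

def IsLatinRectangle {ι α : Type*} (R : ι → α → α) : Prop :=
  (∀ r, Injective (R r)) ∧ ∀ c, Injective fun r => R r c

lemma IsLatinRectangle.exists_new_row {ι α : Type*} [Fintype ι] [Fintype α] [DecidableEq α]
    {R : ι → α → α} (hR : IsLatinRectangle R)
    (hcard : Fintype.card ι < Fintype.card α) :
    ∃ f : α → α, Injective f ∧ ∀ r c, R r c ≠ f c := by
  set missing : α → Finset α := fun c => univ \ univ.image fun r => R r c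
  have mem_missing : ∀ v c, v ∈ missing c ↔ ∀ r, R r c ≠ v := by simp [missing]
  have card_missing : ∀ c, #(missing c) = Fintype.card α - Fintype.card ι := fun c => by
    rw [card_univ_sdiff, card_image_of_injective _ (hR.2 c), card_univ]
  have card_present : ∀ v, Fintype.card ι ≤ #(univ.filter fun c => v ∉ missing c) := by
    intro v
    choose col hcol using fun r => (Finite.injective_iff_surjective.1 (hR.1 r)) v
    have hinj : Injective col := fun r s h => hR.2 (col s) (by simp only; rw [← h, hcol, h, hcol])
    rw [← card_univ, ← card_image_of_injective _ hinj]
    exact card_le_card fun c hc => by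
      obtain ⟨r, -, rfl⟩ := mem_image.1 hc
      simpa [mem_missing] using ⟨r, hcol r⟩
  -- double counting: each column misses `|α| - |ι|` symbols, each symbol at most that many columns
  have hall : ∀ s : Finset α, #s ≤ #(s.biUnion missing) := by
    intro s
    refine Nat.le_of_mul_le_mul_right (card_mul_le_card_mul (fun c v => v ∈ missing c)
      (m := Fintype.card α - Fintype.card ι) (n := Fintype.card α - Fintype.card ι)
      (fun c hc => ?_) (fun v _ => ?_)) (by omega)
    · rw [bipartiteAbove, filter_mem_eq_inter,
        inter_eq_right.2 (subset_biUnion_of_mem missing hc), card_missing]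
    · have hsplit := card_filter_add_card_filter_not (s := univ) fun c => v ∈ missing c
      rw [card_univ] at hsplit
      calc #(s.bipartiteBelow _ v) ≤ #(univ.filter fun c => v ∈ missing c) :=
            card_le_card (filter_subset_filter _ (subset_univ s))
        _ ≤ _ := by have := card_present v; omega
  obtain ⟨f, hf, hmem⟩ := (all_card_le_biUnion_card_iff_existsInjective' missing).1 hall
  exact ⟨f, hf, fun r c => (mem_missing _ _).1 (hmem c) r⟩

lemma IsLatinRectangle.exists_latinSquare_extension {k N : ℕ} {R : Fin k → Fin N → Fin N}
    (hR : IsLatinRectangle R) (hk : k ≤ N) :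
    ∃ Q : Fin N → Fin N → Fin N, IsLatinRectangle Q ∧ ∀ r, Q (Fin.castLE hk r) = R r := by
  obtain ⟨d, hd⟩ : ∃ d, N - k = d := ⟨_, rfl⟩
  induction d generalizing k with
  | zero =>
    obtain rfl : k = N := by omega
    exact ⟨R, hR, fun r => rfl⟩
  | succ d ih =>
    obtain ⟨f, hf, hfR⟩ := hR.exists_new_row (by simp only [Fintype.card_fin]; omega)
    have hR' : IsLatinRectangle (Fin.snoc R f : Fin (k + 1) → Fin N → Fin N) := by
      refine ⟨Fin.lastCases (by simpa using hf) (fun r => by simpa using hR.1 r), fun c => ?_⟩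
      have hcol : (fun r => (Fin.snoc R f : Fin (k + 1) → Fin N → Fin N) r c) =
          Fin.snoc (fun r => R r c) (f c) := by
        ext r; induction r using Fin.lastCases <;> simp
      rw [hcol]
      exact Fin.snoc_injective_of_injective (hR.2 c) fun ⟨r, hr⟩ => hfR r c hr
    obtain ⟨Q, hQ, hQR⟩ := ih hR' (by omega) (by omega)
    exact ⟨Q, hQ, fun r => by simpa using hQR r.castSucc⟩

lemma Set.MapsTo.compl_of_injective {α : Type*} [Finite α] {f : α → α} {s : Set α}
    (hs : Set.MapsTo f s s) (hf : Injective f) : Set.MapsTo f sᶜ sᶜ :=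
  ((s.toFinite.injOn_iff_bijOn_of_mapsTo hs).1 hf.injOn).surjOn.mapsTo_compl hf

section Subsquare

variable {μ i j : ℕ}

def cyclicRectangle (hij : i ≤ j) : Fin i → Fin (i + j) → Fin (i + j) := fun a =>
  Fin.append (fun b => Fin.castAdd j (a + b)) (fun b => Fin.natAdd i (Fin.castLE hij a + b))

lemma castAdd_ne_natAdd (a : Fin i) (b : Fin j) : Fin.castAdd j a ≠ Fin.natAdd i b :=
  Fin.ne_of_val_ne (by simp only [Fin.val_castAdd, Fin.val_natAdd]; omega)

lemma isLatinRectangle_cyclicRectangle (hij : i ≤ j) :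
    IsLatinRectangle (cyclicRectangle hij) := by
  refine ⟨fun a => Fin.append_injective_iff.2 ⟨?_, ?_, fun b c => castAdd_ne_natAdd _ _⟩,
    fun c => ?_⟩
  · exact (Fin.castAdd_injective _ _).comp (add_right_injective a)
  · exact (Fin.natAdd_injective _ _).comp (add_right_injective _)
  · induction c using Fin.addCases with
    | left b => exact fun a a' h => add_left_injective b (by simpa [cyclicRectangle] using h)
    | right b =>
      refine fun a a' h => Fin.castLE_injective hij (add_left_injective b ?_)
      simpa [cyclicRectangle] using h

lemma exists_latinSquare_with_subsquare (hij : i ≤ j) :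
    ∃ Q : Fin (i + j) → Fin (i + j) → Fin (i + j), IsLatinRectangle Q ∧
      ∀ a b, (Q (Fin.castAdd j a) (Fin.castAdd j b) : ℕ) < i := by
  obtain ⟨Q, hQ, hQR⟩ := (isLatinRectangle_cyclicRectangle hij).exists_latinSquare_extension
    (Nat.le_add_right i j)
  refine ⟨Q, hQ, fun a b => ?_⟩
  rw [show Fin.castAdd j a = Fin.castLE _ a from rfl, hQR]
  simp [cyclicRectangle]

lemma injective_append_of_lt {g : Fin i → Fin i} {f : Fin (i + j) → Fin (i + j)}
    (hg : Injective g) (hf : Injective f) (hcorner : ∀ a, (f (Fin.castAdd j a) : ℕ) < i) :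
    Injective (Fin.append (fun a => Fin.castAdd j (g a)) fun b => f (Fin.natAdd i b)) := by
  -- `f` maps the first `i` points to themselves, hence also the last `j`
  have hmaps : Set.MapsTo f {x | (x : ℕ) < i} {x | (x : ℕ) < i} := fun x (hx : (x : ℕ) < i) =>
    hcorner ⟨x, hx⟩
  refine Fin.append_injective_iff.2 ⟨(Fin.castAdd_injective _ _).comp hg,
    hf.comp (Fin.natAdd_injective _ _), fun a b h => ?_⟩
  have hb : Fin.natAdd i b ∈ {x : Fin (i + j) | (x : ℕ) < i}ᶜ := by simp
  have := hmaps.compl_of_injective hf hb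
  rw [← h] at this
  exact this (g a).isLt

def overlay (Q : Fin (i + j) → Fin (i + j) → Fin (i + j)) (L : Fin μ → Fin i → Fin i → Fin i) :
    Fin μ → Fin (i + j) → Fin (i + j) → Fin (i + j) := fun m =>
  Fin.append (fun a => Fin.append (fun b => Fin.castAdd j (L m a b))
    fun b => Q (Fin.castAdd j a) (Fin.natAdd i b)) fun a => Q (Fin.natAdd i a)

variable (Q : Fin (i + j) → Fin (i + j) → Fin (i + j)) (L : Fin μ → Fin i → Fin i → Fin i)

@[simp] lemma overlay_castAdd (m : Fin μ) (a : Fin i) :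
    overlay Q L m (Fin.castAdd j a) =
      Fin.append (fun b => Fin.castAdd j (L m a b)) fun b => Q (Fin.castAdd j a) (Fin.natAdd i b) :=
  Fin.append_left _ _ a

@[simp] lemma overlay_natAdd (m : Fin μ) (a : Fin j) :
    overlay Q L m (Fin.natAdd i a) = Q (Fin.natAdd i a) :=
  Fin.append_right _ _ a

@[simp] lemma isFixedCell_overlay_castAdd_castAdd (a b : Fin i) :
    IsFixedCell (overlay Q L) (Fin.castAdd j a) (Fin.castAdd j b) ↔ IsFixedCell L a b := by
  simp [IsFixedCell]

@[simp] lemma isFixedCell_overlay_castAdd_natAdd (a : Fin i) (b : Fin j) :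
    IsFixedCell (overlay Q L) (Fin.castAdd j a) (Fin.natAdd i b) := by
  simp [IsFixedCell]

@[simp] lemma isFixedCell_overlay_natAdd (a : Fin j) (c : Fin (i + j)) :
    IsFixedCell (overlay Q L) (Fin.natAdd i a) c := by
  simp [IsFixedCell]

lemma numFixed_overlay : numFixed (overlay Q L) = numFixed L + ((i + j) ^ 2 - i ^ 2) := by
  simp only [numFixed_eq_sum, Fin.sum_univ_add, isFixedCell_overlay_castAdd_castAdd,
    isFixedCell_overlay_castAdd_natAdd, isFixedCell_overlay_natAdd, ite_true, sum_const,
    sum_add_distrib, card_univ, Fintype.card_fin, smul_eq_mul, mul_one]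
  zify [Nat.pow_le_pow_left (Nat.le_add_right i j) 2]
  ring

variable {Q L}

lemma isMuWayLatinSquare_overlay (hL : IsMuWayLatinSquare L) (hQ : IsLatinRectangle Q)
    (hcorner : ∀ a b, (Q (Fin.castAdd j a) (Fin.castAdd j b) : ℕ) < i) :
    IsMuWayLatinSquare (overlay Q L) := by
  refine ⟨fun m r => ?_, fun m c => ?_, fun r c => ?_⟩
  · induction r using Fin.addCases with
    | left a => simpa using injective_append_of_lt (hL.1 m a) (hQ.1 _) (hcorner a)
    | right a => simpa using hQ.1 _
  · induction c using Fin.addCases with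
    | left b =>
      have : (fun r => overlay Q L m r (Fin.castAdd j b)) = Fin.append
          (fun a => Fin.castAdd j (L m a b)) fun a => Q (Fin.natAdd i a) (Fin.castAdd j b) := by
        ext r; induction r using Fin.addCases <;> simp
      rw [this]
      exact injective_append_of_lt (hL.2.1 m b) (hQ.2 _) (hcorner · b)
    | right b =>
      have : (fun r => overlay Q L m r (Fin.natAdd i b)) = fun r => Q r (Fin.natAdd i b) := by
        ext r; induction r using Fin.addCases <;> simp
      rw [this]
      exact hQ.2 _
  · induction r using Fin.addCases with
    | left a =>
      induction c using Fin.addCases with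
      | left b =>
        simp only [overlay_castAdd, Fin.append_left, Fin.castAdd_inj]
        exact (hL.2.2 a b).imp_right (Fin.castAdd_injective i j).comp
      | right b => exact .inl (isFixedCell_overlay_castAdd_natAdd Q L a b)
    | right a => exact .inl (isFixedCell_overlay_natAdd Q L a c)

end Subsquare

section Inflation

variable {μ p n : ℕ}

def inflate (A : Fin p → Fin p → Fin p) (L : Fin p → Fin p → Fin μ → Fin n → Fin n → Fin n) :
    Fin μ → Fin (p * n) → Fin (p * n) → Fin (p * n) := fun m r c =>
  letI r' := finProdFinEquiv.symm r
  letI c' := finProdFinEquiv.symm c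
  finProdFinEquiv (A r'.1 c'.1, L r'.1 c'.1 m r'.2 c'.2)

variable (A : Fin p → Fin p → Fin p) (L : Fin p → Fin p → Fin μ → Fin n → Fin n → Fin n)

@[simp] lemma inflate_apply (m : Fin μ) (a b : Fin p) (x y : Fin n) :
    inflate A L m (finProdFinEquiv (a, x)) (finProdFinEquiv (b, y)) =
      finProdFinEquiv (A a b, L a b m x y) := by
  simp only [inflate, Equiv.symm_apply_apply]

@[simp] lemma isFixedCell_inflate (a b : Fin p) (x y : Fin n) :
    IsFixedCell (inflate A L) (finProdFinEquiv (a, x)) (finProdFinEquiv (b, y)) ↔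
      IsFixedCell (L a b) x y := by
  simp [IsFixedCell]

lemma numFixed_inflate : numFixed (inflate A L) = ∑ a, ∑ b, numFixed (L a b) := by
  rw [numFixed_eq_sum, ← finProdFinEquiv.sum_comp, Fintype.sum_prod_type]
  refine sum_congr rfl fun a _ => ?_
  simp_rw [← finProdFinEquiv.sum_comp, Fintype.sum_prod_type, isFixedCell_inflate, numFixed_eq_sum]
  exact sum_comm

variable {A L}

lemma isMuWayLatinSquare_inflate (hA : IsLatinRectangle A)
    (hL : ∀ a b, IsMuWayLatinSquare (L a b)) :
    IsMuWayLatinSquare (inflate A L) := by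
  have hsplit := (finProdFinEquiv : Fin p × Fin n ≃ Fin (p * n)).surjective
  refine ⟨fun m r c c' h => ?_, fun m c r r' h => ?_, fun r c => ?_⟩
  · obtain ⟨⟨a, x⟩, rfl⟩ := hsplit r
    obtain ⟨⟨b, y⟩, rfl⟩ := hsplit c
    obtain ⟨⟨b', y'⟩, rfl⟩ := hsplit c'
    simp only [inflate_apply, EmbeddingLike.apply_eq_iff_eq, Prod.mk.injEq] at h ⊢
    obtain rfl := hA.1 a h.1
    exact ⟨rfl, (hL a b).1 m x h.2⟩
  · obtain ⟨⟨b, y⟩, rfl⟩ := hsplit c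
    obtain ⟨⟨a, x⟩, rfl⟩ := hsplit r
    obtain ⟨⟨a', x'⟩, rfl⟩ := hsplit r'
    simp only [inflate_apply, EmbeddingLike.apply_eq_iff_eq, Prod.mk.injEq] at h ⊢
    obtain rfl := hA.2 b h.1
    exact ⟨rfl, (hL a b).2.1 m y h.2⟩
  · obtain ⟨⟨a, x⟩, rfl⟩ := hsplit r
    obtain ⟨⟨b, y⟩, rfl⟩ := hsplit c
    refine ((hL a b).2.2 x y).imp (isFixedCell_inflate A L a b x y).2 fun hinj m m' h => ?_
    simp only [inflate_apply, EmbeddingLike.apply_eq_iff_eq, Prod.mk.injEq] at h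
    exact hinj h.2

end Inflation

lemma isLatinRectangle_add {G : Type*} [Add G] [IsCancelAdd G] :
    IsLatinRectangle fun a b : G => a + b :=
  ⟨add_right_injective, add_left_injective⟩

open Pointwise in
lemma spectrum_add_add_add_subset (μ n : ℕ) :
    Spectrum μ n + Spectrum μ n + Spectrum μ n + Spectrum μ n ⊆ Spectrum μ (2 * n) := by
  rintro _ ⟨_, ⟨_, ⟨_, ⟨L₁, h₁, rfl⟩, _, ⟨L₂, h₂, rfl⟩, rfl⟩, _, ⟨L₃, h₃, rfl⟩, rfl⟩, _,
    ⟨L₄, h₄, rfl⟩, rfl⟩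
  refine ⟨inflate (· + ·) ![![L₁, L₂], ![L₃, L₄]], isMuWayLatinSquare_inflate isLatinRectangle_add
    (fun a b => ?_), ?_⟩
  · fin_cases a <;> fin_cases b <;> assumption
  · simp [numFixed_inflate, add_assoc]

open Pointwise in
lemma spectrum_add_sq_sub_sq_subset {μ i N : ℕ} (h : 2 * i ≤ N) :
    Spectrum μ i + {N ^ 2 - i ^ 2} ⊆ Spectrum μ N := by
  obtain ⟨j, rfl⟩ : ∃ j, N = i + j := ⟨N - i, by omega⟩
  rintro _ ⟨_, ⟨L, hL, rfl⟩, _, rfl, rfl⟩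
  obtain ⟨Q, hQ, hcorner⟩ := exists_latinSquare_with_subsquare (show i ≤ j by omega)
  exact ⟨overlay Q L, isMuWayLatinSquare_overlay hL hQ hcorner, numFixed_overlay Q L⟩

open Pointwise in
theorem stmt_10_general (μ n : ℕ) :
    (Spectrum μ n + Spectrum μ n + Spectrum μ n + Spectrum μ n) ∪
      (⋃ i ∈ Set.Icc 1 n, (Spectrum μ i + ({(2 * n) ^ 2 - i ^ 2} : Set ℕ))) ⊆
    Spectrum μ (2 * n) :=
  Set.union_subset (spectrum_add_add_add_subset μ n) <|
    Set.iUnion₂_subset fun _ hi => spectrum_add_sq_sub_sq_subset (by simp at hi; omega)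

open Pointwise in
theorem stmt_10 (μ n : ℕ) (hn : 1 ≤ n) (hμ : 2 ≤ μ) :
    (Spectrum μ n + Spectrum μ n + Spectrum μ n + Spectrum μ n) ∪
      (⋃ i ∈ Set.Icc 1 n, (Spectrum μ i + ({(2 * n) ^ 2 - i ^ 2} : Set ℕ))) ⊆
    Spectrum μ (2 * n) :=
  stmt_10_general μ n
end

section
/- There is no 4-way latin square of order 5 with exactly 9 fixed cells, i.e., 9 ∉ I⁴[5]. -/
/-- Number of fixed cells in column `j`. -/
def colFixedAux {μ n : ℕ} (L : Fin μ → Fin n → Fin n → Fin n) (j : Fin n) : ℕ :=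
  (Finset.univ.filter fun i : Fin n => IsFixedCell L i j).card

lemma numFixed_eq_sum_row {μ n : ℕ} (L : Fin μ → Fin n → Fin n → Fin n) :
    numFixed L = ∑ i, rowFixed L i := by
  unfold numFixed rowFixed
  rw [Finset.card_filter, Fintype.sum_prod_type]
  exact Finset.sum_congr rfl fun i _ => (Finset.card_filter _ _).symm

lemma numFixed_eq_sum_col {μ n : ℕ} (L : Fin μ → Fin n → Fin n → Fin n) :
    numFixed L = ∑ j, colFixedAux L j := by
  unfold numFixed colFixedAux
  rw [Finset.card_filter, Fintype.sum_prod_type]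
  rw [Finset.sum_comm]
  exact Finset.sum_congr rfl fun j _ => (Finset.card_filter _ _).symm

lemma row_dichotomy (L : Fin 4 → Fin 5 → Fin 5 → Fin 5) (h : IsMuWayLatinSquare L)
    (i : Fin 5) : rowFixed L i = 5 ∨ rowFixed L i ≤ 1 := by
  obtain ⟨hrow, hcol, hcell⟩ := h
  by_cases hall : ∀ j, IsFixedCell L i j
  · left
    unfold rowFixed
    rw [Finset.filter_true_of_mem (fun j _ => hall j)]
    simp
  · right
    push_neg at hall
    obtain ⟨j, hj⟩ := hall
    have hinj : Function.Injective (fun a => L a i j) := (hcell i j).resolve_left hj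
    set F := Finset.univ.filter fun j' : Fin 5 => IsFixedCell L i j' with hF
    set S := Finset.image (fun a : Fin 4 => L a i j) Finset.univ with hSdef
    set T := Finset.image (fun j' => L 0 i j') F with hTdef
    have hS : S.card = 4 := by
      rw [hSdef, Finset.card_image_of_injective _ hinj, Finset.card_univ, Fintype.card_fin]
    have hT : T.card = F.card :=
      Finset.card_image_of_injective _ (hrow 0 i)
    have hdisj : Disjoint S T := by
      rw [Finset.disjoint_left]
      rintro x hxS hxT
      obtain ⟨a, -, ha⟩ := Finset.mem_image.mp hxS
      obtain ⟨j', hj', hj'x⟩ := Finset.mem_image.mp hxT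
      have hfix : IsFixedCell L i j' := (Finset.mem_filter.mp hj').2
      have heq : L a i j = L a i j' := by
        rw [ha, ← hj'x]; exact hfix 0 a
      have hjj : j = j' := hrow a i heq
      exact hj (hjj ▸ hfix)
    have hle : S.card + T.card ≤ 5 := by
      rw [← Finset.card_union_of_disjoint hdisj]
      calc (S ∪ T).card ≤ (Finset.univ : Finset (Fin 5)).card := Finset.card_le_univ _
        _ = 5 := by simp
    unfold rowFixed
    rw [← hF]
    omega

lemma col_dichotomy (L : Fin 4 → Fin 5 → Fin 5 → Fin 5) (h : IsMuWayLatinSquare L)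
    (j : Fin 5) : colFixedAux L j = 5 ∨ colFixedAux L j ≤ 1 := by
  obtain ⟨hrow, hcol, hcell⟩ := h
  by_cases hall : ∀ i, IsFixedCell L i j
  · left
    unfold colFixedAux
    rw [Finset.filter_true_of_mem (fun i _ => hall i)]
    simp
  · right
    push_neg at hall
    obtain ⟨i, hi⟩ := hall
    have hinj : Function.Injective (fun a => L a i j) := (hcell i j).resolve_left hi
    set F := Finset.univ.filter fun i' : Fin 5 => IsFixedCell L i' j with hF
    set S := Finset.image (fun a : Fin 4 => L a i j) Finset.univ with hSdef
    set T := Finset.image (fun i' => L 0 i' j) F with hTdef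
    have hS : S.card = 4 := by
      rw [hSdef, Finset.card_image_of_injective _ hinj, Finset.card_univ, Fintype.card_fin]
    have hT : T.card = F.card :=
      Finset.card_image_of_injective _ (hcol 0 j)
    have hdisj : Disjoint S T := by
      rw [Finset.disjoint_left]
      rintro x hxS hxT
      obtain ⟨a, -, ha⟩ := Finset.mem_image.mp hxS
      obtain ⟨i', hi', hi'x⟩ := Finset.mem_image.mp hxT
      have hfix : IsFixedCell L i' j := (Finset.mem_filter.mp hi').2
      have heq : L a i j = L a i' j := by
        rw [ha, ← hi'x]; exact hfix 0 a
      have hii : i = i' := hcol a j heq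
      exact hi (hii ▸ hfix)
    have hle : S.card + T.card ≤ 5 := by
      rw [← Finset.card_union_of_disjoint hdisj]
      calc (S ∪ T).card ≤ (Finset.univ : Finset (Fin 5)).card := Finset.card_le_univ _
        _ = 5 := by simp
    unfold colFixedAux
    rw [← hF]
    omega

theorem stmt_12 : (9 : ℕ) ∉ Spectrum 4 5 := by
  rintro ⟨L, hL, hnum⟩
  obtain ⟨hrow, hcol, hcell⟩ := hL
  have hLsq : IsMuWayLatinSquare L := ⟨hrow, hcol, hcell⟩
  have hsumrow : ∑ i, rowFixed L i = 9 := by rw [← numFixed_eq_sum_row]; exact hnum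
  have hsumcol : ∑ j, colFixedAux L j = 9 := by rw [← numFixed_eq_sum_col]; exact hnum
  -- there is a fully fixed row
  have hex5 : ∃ r0, rowFixed L r0 = 5 := by
    by_contra h5
    push_neg at h5
    have hle : ∀ i, rowFixed L i ≤ 1 :=
      fun i => (row_dichotomy L hLsq i).resolve_left (h5 i)
    have : ∑ i, rowFixed L i ≤ ∑ _i : Fin 5, 1 :=
      Finset.sum_le_sum fun i _ => hle i
    simp at this
    omega
  obtain ⟨r0, hr0⟩ := hex5
  have hother : ∀ i, i ≠ r0 → rowFixed L i ≤ 1 := by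
    intro i hi
    rcases row_dichotomy L hLsq i with h5 | h1
    · exfalso
      have hsub : ({r0, i} : Finset (Fin 5)) ⊆ Finset.univ := Finset.subset_univ _
      have hge : ∑ k ∈ ({r0, i} : Finset (Fin 5)), rowFixed L k ≤ ∑ k, rowFixed L k :=
        Finset.sum_le_sum_of_subset hsub
      rw [Finset.sum_pair (Ne.symm hi)] at hge
      omega
    · exact h1
  -- there is a fully fixed column
  have hexc5 : ∃ c0, colFixedAux L c0 = 5 := by
    by_contra h5
    push_neg at h5
    have hle : ∀ j, colFixedAux L j ≤ 1 :=
      fun j => (col_dichotomy L hLsq j).resolve_left (h5 j)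
    have : ∑ j, colFixedAux L j ≤ ∑ _j : Fin 5, 1 :=
      Finset.sum_le_sum fun j _ => hle j
    simp at this
    omega
  obtain ⟨c0, hc0⟩ := hexc5
  -- row r0 is fully fixed
  have hrowfull : ∀ j, IsFixedCell L r0 j := by
    have hcard : (Finset.univ.filter fun j : Fin 5 => IsFixedCell L r0 j).card =
        (Finset.univ : Finset (Fin 5)).card := by
      rw [Finset.card_univ, Fintype.card_fin]; exact hr0
    have heq := Finset.eq_univ_of_card _ hcard
    intro j
    have := heq ▸ Finset.mem_univ j
    exact (Finset.mem_filter.mp this).2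
  -- column c0 is fully fixed
  have hcolfull : ∀ i, IsFixedCell L i c0 := by
    have hcard : (Finset.univ.filter fun i : Fin 5 => IsFixedCell L i c0).card =
        (Finset.univ : Finset (Fin 5)).card := by
      rw [Finset.card_univ, Fintype.card_fin]; exact hc0
    have heq := Finset.eq_univ_of_card _ hcard
    intro i
    have := heq ▸ Finset.mem_univ i
    exact (Finset.mem_filter.mp this).2
  -- pick a column j ≠ c0
  obtain ⟨j, hj⟩ : ∃ j : Fin 5, j ≠ c0 := exists_ne c0
  set s := L 0 r0 j with hs
  -- pick a row i ≠ r0 with L 0 i c0 ≠ s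
  obtain ⟨i, hi, him⟩ : ∃ i : Fin 5, i ≠ r0 ∧ L 0 i c0 ≠ s := by
    by_contra hcon
    push_neg at hcon
    have key : ∀ r : Fin 5, ∃ i₁ i₂ : Fin 5, i₁ ≠ i₂ ∧ i₁ ≠ r ∧ i₂ ≠ r := by decide
    obtain ⟨i₁, i₂, h12, h1r, h2r⟩ := key r0
    have e1 := hcon i₁ h1r
    have e2 := hcon i₂ h2r
    exact h12 (hcol 0 c0 (show L 0 i₁ c0 = L 0 i₂ c0 by rw [e1, e2]))
  -- cell (i, j) is not fixed
  have hnotfix : ¬ IsFixedCell L i j := by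
    intro hfix
    have hsub : ({c0, j} : Finset (Fin 5)) ⊆
        Finset.univ.filter fun j' : Fin 5 => IsFixedCell L i j' := by
      intro x hx
      rcases Finset.mem_insert.mp hx with hx | hx
      · subst hx; exact Finset.mem_filter.mpr ⟨Finset.mem_univ _, hcolfull i⟩
      · rw [Finset.mem_singleton.mp hx]
        exact Finset.mem_filter.mpr ⟨Finset.mem_univ _, hfix⟩
    have h2 : 2 ≤ rowFixed L i := by
      have := Finset.card_le_card hsub
      rwa [Finset.card_pair (Ne.symm hj)] at this
    have := hother i hi
    omega
  have hinj : Function.Injective (fun a => L a i j) := (hcell i j).resolve_left hnotfix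
  set m := L 0 i c0 with hm
  have hmne : ∀ a, L a i j ≠ m := by
    intro a heq
    have hfx : L a i c0 = m := hcolfull i a 0
    exact hj (hrow a i (heq.trans hfx.symm))
  set A := Finset.image (fun a : Fin 4 => L a i j) Finset.univ with hA
  have hAcard : A.card = 4 := by
    rw [hA, Finset.card_image_of_injective _ hinj, Finset.card_univ, Fintype.card_fin]
  have hsub : A ⊆ Finset.univ \ {m} := by
    intro x hx
    obtain ⟨a, -, ha⟩ := Finset.mem_image.mp hx
    refine Finset.mem_sdiff.mpr ⟨Finset.mem_univ _, ?_⟩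
    rw [Finset.mem_singleton]
    rw [← ha]
    exact hmne a
  have hsdcard : (Finset.univ \ ({m} : Finset (Fin 5))).card = 4 := by
    rw [Finset.card_sdiff_of_subset (by simp)]
    simp
  have hAeq : A = Finset.univ \ {m} :=
    Finset.eq_of_subset_of_card_le hsub (by omega)
  have hsA : s ∈ A := by
    rw [hAeq]
    refine Finset.mem_sdiff.mpr ⟨Finset.mem_univ _, ?_⟩
    rw [Finset.mem_singleton]
    exact fun hsm => him (hsm ▸ rfl)
  obtain ⟨a, -, ha⟩ := Finset.mem_image.mp hsA
  have hr0j : L a r0 j = s := hrowfull j a 0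
  exact hi (hcol a j (ha.trans hr0j.symm))
end

section
/- For each μ ≥ 2 and each i ∈ {0,1,…,μ}, there exists a μ-way latin trade of volume s for every s in the interval [μ(3μ−i), μ(3μ−i) + (μ−i)]. -/
lemma nat_mod_cancel {n x y c : ℕ} (hx : x < n) (hy : y < n)
    (h : (x + c) % n = (y + c) % n) : x = y := by
  have h1 : x % n = y % n := Nat.ModEq.add_right_cancel' c h
  rwa [Nat.mod_eq_of_lt hx, Nat.mod_eq_of_lt hy] at h1

lemma exists_shift {n c s : ℕ} (hs : s < n) : ∃ j, j < n ∧ (j + c) % n = s := by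
  have hn : 0 < n := lt_of_le_of_lt (Nat.zero_le _) hs
  have hc : c % n < n := Nat.mod_lt _ hn
  refine ⟨(s + (n - c % n)) % n, Nat.mod_lt _ hn, ?_⟩
  rw [Nat.mod_add_mod]
  have h2 : (s + (n - c % n) + c) % n = (s + (n - c % n) + c % n) % n := by
    conv_lhs => rw [Nat.add_mod]
    conv_rhs => rw [Nat.add_mod, Nat.mod_mod_of_dvd _ dvd_rfl]
  rw [h2]
  have h3 : s + (n - c % n) + c % n = s + n := by omega
  rw [h3, Nat.add_mod_right, Nat.mod_eq_of_lt hs]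

lemma sub_shift_mod {n x y : ℕ} (hx : x < n) (hy : y < n) :
    (x + n - y) % n = if y ≤ x then x - y else x + n - y := by
  split
  · next h =>
    have e : x + n - y = (x - y) + n := by omega
    rw [e, Nat.add_mod_right, Nat.mod_eq_of_lt (by omega)]
  · next h => exact Nat.mod_eq_of_lt (by omega)

lemma teeth_ne {μ t j r : ℕ} (hμ : 1 ≤ μ) (ht : 1 ≤ t) (hj : j < μ + t) (hr1 : 1 ≤ r) (hr2 : r ≤ μ) :
    (μ - 1) + ((j + t + 1) % (μ + t)) ≠ (j + r) % (μ + t) := by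
  intro h
  have hL : ((μ - 1) + ((j + t + 1) % (μ + t))) % (μ + t) = j := by
    have h1 : ((μ - 1) + ((j + t + 1) % (μ + t))) % (μ + t)
        = ((μ - 1) + (j + t + 1)) % (μ + t) :=
      Nat.ModEq.add_left _ (Nat.mod_modEq _ _)
    have h2 : (μ - 1) + (j + t + 1) = j + (μ + t) := by omega
    rw [h1, h2, Nat.add_mod_right, Nat.mod_eq_of_lt hj]
  have hR : j = ((j + r) % (μ + t)) % (μ + t) := by rw [← h, hL]
  rw [Nat.mod_mod_of_dvd _ dvd_rfl] at hR
  clear h hL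
  have hsplit : (j + r < μ + t ∧ (j + r) % (μ + t) = j + r)
      ∨ (μ + t ≤ j + r ∧ (j + r) % (μ + t) = j + r - (μ + t)) := by
    by_cases hc : j + r < μ + t
    · exact Or.inl ⟨hc, Nat.mod_eq_of_lt hc⟩
    · exact Or.inr ⟨by omega, by rw [Nat.mod_eq_sub_mod (by omega), Nat.mod_eq_of_lt (by omega)]⟩
  rcases hsplit with ⟨h5,h6⟩ | ⟨h5,h6⟩ <;> omega

/-- Two side-by-side circulant rectangles: a full `(μ+1) × a` block on columns `< a`
and a `μ × w` block on the remaining columns, with disjoint symbol sets. -/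
def comboT (μ a w : ℕ) : Fin μ → Fin (μ+1) → Fin (a+w) → Option ℕ := fun m i j =>
  if (j : ℕ) < a then some (((j : ℕ) + ((i : ℕ) + (m : ℕ)) % (μ+1)) % a)
  else if (i : ℕ) < μ then some (a + (((j : ℕ) - a + ((i : ℕ) + (m : ℕ)) % μ) % w))
  else none

lemma combo_shape {μ a w : ℕ} (m : Fin μ) (i : Fin (μ+1)) (j : Fin (a+w)) :
    (comboT μ a w m i j).isSome ↔ ((j : ℕ) < a ∨ (i : ℕ) < μ) := by
  unfold comboT
  split_ifs with h1 h2 <;> simp [*]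

/-- If a combo cell holds `some s`, we can classify the value. -/
lemma combo_val {μ a w : ℕ} {m : Fin μ} {i : Fin (μ+1)} {j : Fin (a+w)} {s : ℕ}
    (h : comboT μ a w m i j = some s) :
    ((j : ℕ) < a ∧ s = ((j : ℕ) + ((i : ℕ) + (m : ℕ)) % (μ+1)) % a) ∨
    (a ≤ (j : ℕ) ∧ (i : ℕ) < μ ∧
      s = a + (((j : ℕ) - a + ((i : ℕ) + (m : ℕ)) % μ) % w)) := by
  unfold comboT at h
  split_ifs at h with h1 h2
  · exact Or.inl ⟨h1, ((Option.some.injEq _ _).mp h).symm⟩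
  · exact Or.inr ⟨by omega, h2, ((Option.some.injEq _ _).mp h).symm⟩

lemma combo_rowset {μ a w : ℕ} (m : Fin μ) (i : Fin (μ+1)) :
    {s | ∃ j, comboT μ a w m i j = some s}
      = {s : ℕ | s < a + w ∧ ((i : ℕ) < μ ∨ s < a)} := by
  ext s
  simp only [Set.mem_setOf_eq]
  constructor
  · rintro ⟨j, hj⟩
    rcases combo_val hj with ⟨h1, rfl⟩ | ⟨h1, h2, rfl⟩
    · have hlt : ((j : ℕ) + ((i : ℕ) + (m : ℕ)) % (μ+1)) % a < a := Nat.mod_lt _ (by omega)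
      omega
    · have hw0 : 0 < w := by have := j.isLt; omega
      have hlt : (((j : ℕ) - a + ((i : ℕ) + (m : ℕ)) % μ) % w) < w := Nat.mod_lt _ hw0
      omega
  · rintro ⟨hs1, hs2⟩
    by_cases hsa : s < a
    · obtain ⟨j, hjlt, hje⟩ := exists_shift (c := ((i : ℕ) + (m : ℕ)) % (μ+1)) hsa
      refine ⟨⟨j, by omega⟩, ?_⟩
      unfold comboT
      rw [if_pos (show ((⟨j, by omega⟩ : Fin (a+w)) : ℕ) < a from hjlt)]
      exact congrArg some hje
    · have hiμ : (i : ℕ) < μ := by omega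
      have hw0 : 0 < w := by omega
      obtain ⟨x, hxlt, hxe⟩ := exists_shift (c := ((i : ℕ) + (m : ℕ)) % μ)
        (show s - a < w by omega)
      refine ⟨⟨a + x, by omega⟩, ?_⟩
      unfold comboT
      rw [if_neg (show ¬ ((⟨a + x, by omega⟩ : Fin (a+w)) : ℕ) < a by simp), if_pos hiμ]
      have h1 : (a + x - a) = x := by omega
      rw [show ((⟨a + x, by omega⟩ : Fin (a+w)) : ℕ) - a = x from h1, hxe]
      exact congrArg some (by omega)

lemma combo_colset {μ a w : ℕ} (hμ : 1 ≤ μ) (m : Fin μ) (j : Fin (a+w)) :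
    {s | ∃ i, comboT μ a w m i j = some s}
      = if (j : ℕ) < a then {s : ℕ | ∃ k, k < μ + 1 ∧ s = ((j : ℕ) + k) % a}
        else {s : ℕ | ∃ k, k < μ ∧ s = a + (((j : ℕ) - a + k) % w)} := by
  split_ifs with hj
  · ext s
    simp only [Set.mem_setOf_eq]
    constructor
    · rintro ⟨i, hi⟩
      rcases combo_val hi with ⟨h1, rfl⟩ | ⟨h1, h2, rfl⟩
      · exact ⟨((i : ℕ) + (m : ℕ)) % (μ+1), Nat.mod_lt _ (by omega), rfl⟩
      · omega
    · rintro ⟨k, hk, rfl⟩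
      obtain ⟨x, hxlt, hxe⟩ := exists_shift (c := (m : ℕ)) hk
      refine ⟨⟨x, hxlt⟩, ?_⟩
      unfold comboT
      rw [if_pos hj]
      rw [show ((⟨x, hxlt⟩ : Fin (μ+1)) : ℕ) = x from rfl, hxe]
  · ext s
    simp only [Set.mem_setOf_eq]
    constructor
    · rintro ⟨i, hi⟩
      rcases combo_val hi with ⟨h1, rfl⟩ | ⟨h1, h2, rfl⟩
      · omega
      · exact ⟨((i : ℕ) + (m : ℕ)) % μ, Nat.mod_lt _ (by omega), rfl⟩
    · rintro ⟨k, hk, rfl⟩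
      obtain ⟨x, hxlt, hxe⟩ := exists_shift (c := (m : ℕ)) hk
      refine ⟨⟨x, by omega⟩, ?_⟩
      unfold comboT
      rw [if_neg hj, if_pos (show ((⟨x, by omega⟩ : Fin (μ+1)) : ℕ) < μ from hxlt)]
      rw [show ((⟨x, by omega⟩ : Fin (μ+1)) : ℕ) = x from rfl, hxe]

lemma combo_trade {μ a w : ℕ} (hμ : 1 ≤ μ) (ha : a = 0 ∨ μ + 1 ≤ a) (hw : w = 0 ∨ μ ≤ w) :
    IsMuWayLatinTrade (comboT μ a w) := by
  refine ⟨?_, ?_, ?_, ?_, ?_⟩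
  · -- each is a partial latin rectangle
    intro m
    constructor
    · -- row injectivity
      intro i j₁ j₂ s h1 h2
      rcases combo_val h1 with ⟨c1, e1⟩ | ⟨c1, ci, e1⟩ <;>
        rcases combo_val h2 with ⟨c2, e2⟩ | ⟨c2, ci2, e2⟩
      · exact Fin.ext (nat_mod_cancel c1 c2 (e1.symm.trans e2))
      · have hlt : ((j₁ : ℕ) + ((i : ℕ) + (m : ℕ)) % (μ+1)) % a < a := Nat.mod_lt _ (by omega)
        omega
      · have hlt : ((j₂ : ℕ) + ((i : ℕ) + (m : ℕ)) % (μ+1)) % a < a := Nat.mod_lt _ (by omega)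
        omega
      · have hw1 : (j₁ : ℕ) - a < w := by have := j₁.isLt; omega
        have hw2 : (j₂ : ℕ) - a < w := by have := j₂.isLt; omega
        have := nat_mod_cancel hw1 hw2
          (by omega :
            ((j₁ : ℕ) - a + ((i : ℕ) + (m : ℕ)) % μ) % w
              = ((j₂ : ℕ) - a + ((i : ℕ) + (m : ℕ)) % μ) % w)
        exact Fin.ext (by omega)
    · -- column injectivity
      intro i₁ i₂ j s h1 h2
      rcases combo_val h1 with ⟨c1, e1⟩ | ⟨c1, ci, e1⟩ <;>
        rcases combo_val h2 with ⟨c2, e2⟩ | ⟨c2, ci2, e2⟩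
      · have ha' : μ + 1 ≤ a := by rcases ha with h | h <;> omega
        have k1 : ((i₁ : ℕ) + (m : ℕ)) % (μ+1) < μ + 1 := Nat.mod_lt _ (by omega)
        have k2 : ((i₂ : ℕ) + (m : ℕ)) % (μ+1) < μ + 1 := Nat.mod_lt _ (by omega)
        have e3 : (((i₁ : ℕ) + (m : ℕ)) % (μ+1) + (j : ℕ)) % a
            = (((i₂ : ℕ) + (m : ℕ)) % (μ+1) + (j : ℕ)) % a := by
          rw [Nat.add_comm _ (j : ℕ), Nat.add_comm _ (j : ℕ)]; omega
        have e4 := nat_mod_cancel (by omega) (by omega) e3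
        exact Fin.ext (nat_mod_cancel i₁.isLt i₂.isLt e4)
      · omega
      · omega
      · have hww : μ ≤ w := by
          rcases hw with h | h
          · have := j.isLt; omega
          · exact h
        have k1 : ((i₁ : ℕ) + (m : ℕ)) % μ < μ := Nat.mod_lt _ (by omega)
        have k2 : ((i₂ : ℕ) + (m : ℕ)) % μ < μ := Nat.mod_lt _ (by omega)
        have e3 : (((i₁ : ℕ) + (m : ℕ)) % μ + ((j : ℕ) - a)) % w
            = (((i₂ : ℕ) + (m : ℕ)) % μ + ((j : ℕ) - a)) % w := by
          rw [Nat.add_comm _ ((j : ℕ) - a), Nat.add_comm _ ((j : ℕ) - a)]; omega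
        have e4 := nat_mod_cancel (by omega) (by omega) e3
        exact Fin.ext (nat_mod_cancel (by omega : (i₁ : ℕ) < μ) (by omega : (i₂ : ℕ) < μ) e4)
  · -- same filled cells
    intro m m' i j h
    rw [Option.isSome_iff_exists] at h ⊢
    obtain ⟨x, hx⟩ := h
    rcases combo_val hx with ⟨c1, _⟩ | ⟨c1, ci, _⟩
    · exact ⟨_, by unfold comboT; rw [if_pos c1]⟩
    · exact ⟨_, by unfold comboT; rw [if_neg (by omega), if_pos ci]⟩
  · -- pairwise distinct entries
    intro m m' i j hne h heq
    obtain ⟨x, hx⟩ := Option.isSome_iff_exists.mp h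
    rcases combo_val hx with ⟨c1, _⟩ | ⟨c1, ci, _⟩
    · have v1 : comboT μ a w m i j = some (((j:ℕ) + ((i:ℕ)+(m:ℕ)) % (μ+1)) % a) := by
        unfold comboT; rw [if_pos c1]
      have v2 : comboT μ a w m' i j = some (((j:ℕ) + ((i:ℕ)+(m':ℕ)) % (μ+1)) % a) := by
        unfold comboT; rw [if_pos c1]
      rw [v1, v2] at heq
      have e2 := (Option.some.injEq _ _).mp heq
      have ha' : μ + 1 ≤ a := by rcases ha with h' | h' <;> omega
      have k1 : ((i:ℕ)+(m:ℕ)) % (μ+1) < μ+1 := Nat.mod_lt _ (by omega)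
      have k2 : ((i:ℕ)+(m':ℕ)) % (μ+1) < μ+1 := Nat.mod_lt _ (by omega)
      have e3 : (((i:ℕ)+(m:ℕ)) % (μ+1) + (j:ℕ)) % a
          = (((i:ℕ)+(m':ℕ)) % (μ+1) + (j:ℕ)) % a := by
        rw [Nat.add_comm _ (j:ℕ), Nat.add_comm _ (j:ℕ)]; omega
      have e4 := nat_mod_cancel (by omega) (by omega) e3
      have e5 : ((m:ℕ) + (i:ℕ)) % (μ+1) = ((m':ℕ) + (i:ℕ)) % (μ+1) := by
        rw [Nat.add_comm (m:ℕ), Nat.add_comm (m':ℕ)]; omega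
      have e6 := nat_mod_cancel (by omega : (m:ℕ) < μ+1) (by omega : (m':ℕ) < μ+1) e5
      exact hne (Fin.ext e6)
    · have v1 : comboT μ a w m i j
          = some (a + (((j:ℕ) - a + ((i:ℕ)+(m:ℕ)) % μ) % w)) := by
        unfold comboT; rw [if_neg (by omega), if_pos ci]
      have v2 : comboT μ a w m' i j
          = some (a + (((j:ℕ) - a + ((i:ℕ)+(m':ℕ)) % μ) % w)) := by
        unfold comboT; rw [if_neg (by omega), if_pos ci]
      rw [v1, v2] at heq
      have e2 := (Option.some.injEq _ _).mp heq
      have hww : μ ≤ w := by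
        rcases hw with h' | h'
        · have := j.isLt; omega
        · exact h'
      have k1 : ((i:ℕ)+(m:ℕ)) % μ < μ := Nat.mod_lt _ (by omega)
      have k2 : ((i:ℕ)+(m':ℕ)) % μ < μ := Nat.mod_lt _ (by omega)
      have e3 : (((i:ℕ)+(m:ℕ)) % μ + ((j:ℕ) - a)) % w
          = (((i:ℕ)+(m':ℕ)) % μ + ((j:ℕ) - a)) % w := by
        rw [Nat.add_comm _ ((j:ℕ) - a), Nat.add_comm _ ((j:ℕ) - a)]; omega
      have e4 := nat_mod_cancel (by omega) (by omega) e3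
      have e5 : ((m:ℕ) + (i:ℕ)) % μ = ((m':ℕ) + (i:ℕ)) % μ := by
        rw [Nat.add_comm (m:ℕ), Nat.add_comm (m':ℕ)]; omega
      have e6 := nat_mod_cancel m.isLt m'.isLt e5
      exact hne (Fin.ext e6)
  · intro m m' i
    rw [combo_rowset, combo_rowset]
  · intro m m' j
    rw [combo_colset hμ, combo_colset hμ]

lemma range_filter_lt (a n : ℕ) (h : a ≤ n) :
    ((Finset.range n).filter (fun x => x < a)).card = a := by
  have : (Finset.range n).filter (fun x => x < a) = Finset.range a := by
    ext x
    simp only [Finset.mem_filter, Finset.mem_range]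
    omega
  rw [this, Finset.card_range]

lemma vol_shape {μ a w : ℕ} (T : Fin μ → Fin (μ+1) → Fin (a+w) → Option ℕ)
    (h : ∀ (i : Fin (μ+1)) (j : Fin (a+w)),
      (∃ m, (T m i j).isSome) ↔ ((j : ℕ) < a ∨ (i : ℕ) < μ)) :
    tradeVolume T = (μ+1) * a + μ * w := by
  unfold tradeVolume
  have hfilter : (Finset.univ.filter fun p : Fin (μ+1) × Fin (a+w) =>
        ∃ m, (T m p.1 p.2).isSome)
      = Finset.univ.filter fun p => ((p.2 : ℕ) < a ∨ (p.1 : ℕ) < μ) := by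
    apply Finset.filter_congr
    intro p _
    simpa using h p.1 p.2
  rw [hfilter, Finset.card_filter, Fintype.sum_prod_type]
  have hrow : ∀ i : Fin (μ+1),
      (∑ j : Fin (a+w), if ((j : ℕ) < a ∨ (i : ℕ) < μ) then 1 else 0)
        = if (i : ℕ) < μ then a + w else a := by
    intro i
    by_cases hi : (i : ℕ) < μ
    · simp [hi]
    · simp only [hi, or_false, if_false]
      rw [Fin.sum_univ_eq_sum_range (fun x => if x < a then 1 else 0)]
      rw [← Finset.card_filter]
      exact range_filter_lt a (a + w) (by omega)
  rw [Finset.sum_congr rfl (fun i _ => hrow i)]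
  rw [Fin.sum_univ_castSucc]
  have hlast : ((Fin.last μ : Fin (μ+1)) : ℕ) = μ := rfl
  rw [hlast]
  simp only [Fin.coe_castSucc, lt_self_iff_false, if_false]
  have hterm : ∀ x : Fin μ, (if (x : ℕ) < μ then a + w else a) = a + w := by
    intro x; simp [x.isLt]
  rw [Finset.sum_congr rfl (fun x _ => hterm x)]
  rw [Finset.sum_const, Finset.card_univ, Fintype.card_fin, smul_eq_mul]
  ring

lemma r1_char {μ i m : ℕ} (hi : i < μ+1) (hm : m < μ) :
    ((i + (μ+1) - m) % (μ+1) = i - m ∧ m ≤ i) ∨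
    ((i + (μ+1) - m) % (μ+1) = i + (μ+1) - m ∧ i < m) := by
  rcases le_or_gt m i with h | h
  · exact Or.inl ⟨by rw [sub_shift_mod hi (by omega), if_pos h], h⟩
  · exact Or.inr ⟨by rw [sub_shift_mod hi (by omega), if_neg (by omega)], h⟩

lemma r2_char {μ i m : ℕ} (hi : i < μ) (hm : m < μ) :
    ((i + μ - m) % μ = i - m ∧ m ≤ i) ∨
    ((i + μ - m) % μ = i + μ - m ∧ i < m) := by
  rcases le_or_gt m i with h | h
  · exact Or.inl ⟨by rw [sub_shift_mod hi hm, if_pos h], h⟩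
  · exact Or.inr ⟨by rw [sub_shift_mod hi hm, if_neg (by omega)], h⟩

/-- The "gear" trade: a full `(μ+1) × (μ+t)` block interleaved with a
`μ × (μ-1)` block, with teeth in the row indexed `m` in each rectangle. -/
def gearT (μ t : ℕ) : Fin μ → Fin (μ+1) → Fin ((μ+t)+(μ-1)) → Option ℕ := fun m i j =>
  if (j : ℕ) < μ+t then
    if ((i:ℕ) + (μ+1) - (m:ℕ)) % (μ+1) = 0 then
      some ((μ-1) + (((j:ℕ) + t + 1) % (μ+t)))
    else some (((j:ℕ) + ((i:ℕ) + (μ+1) - (m:ℕ)) % (μ+1)) % (μ+t))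
  else if (i:ℕ) < μ then
    if ((i:ℕ) + μ - (m:ℕ)) % μ = 0 then some ((j:ℕ) - (μ+t))
    else some ((μ+t) + ((((i:ℕ) + μ - (m:ℕ)) % μ - 1 + ((j:ℕ) - (μ+t))) % (μ-1)))
  else none

lemma gear_shape {μ t : ℕ} (m : Fin μ) (i : Fin (μ+1)) (j : Fin ((μ+t)+(μ-1))) :
    (gearT μ t m i j).isSome ↔ ((j : ℕ) < μ+t ∨ (i : ℕ) < μ) := by
  unfold gearT
  split_ifs with h1 h2 h3 h4 <;> simp [*]

lemma gear_val {μ t : ℕ} {m : Fin μ} {i : Fin (μ+1)} {j : Fin ((μ+t)+(μ-1))} {s : ℕ}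
    (h : gearT μ t m i j = some s) :
    ((j:ℕ) < μ+t ∧ ((i:ℕ) + (μ+1) - (m:ℕ)) % (μ+1) = 0 ∧
        s = (μ-1) + (((j:ℕ) + t + 1) % (μ+t))) ∨
    ((j:ℕ) < μ+t ∧ ((i:ℕ) + (μ+1) - (m:ℕ)) % (μ+1) ≠ 0 ∧
        s = ((j:ℕ) + ((i:ℕ) + (μ+1) - (m:ℕ)) % (μ+1)) % (μ+t)) ∨
    (μ+t ≤ (j:ℕ) ∧ (i:ℕ) < μ ∧ ((i:ℕ) + μ - (m:ℕ)) % μ = 0 ∧ s = (j:ℕ) - (μ+t)) ∨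
    (μ+t ≤ (j:ℕ) ∧ (i:ℕ) < μ ∧ ((i:ℕ) + μ - (m:ℕ)) % μ ≠ 0 ∧
        s = (μ+t) + ((((i:ℕ) + μ - (m:ℕ)) % μ - 1 + ((j:ℕ) - (μ+t))) % (μ-1))) := by
  unfold gearT at h
  split_ifs at h with h1 h2 h3 h4
  · exact Or.inl ⟨h1, h2, ((Option.some.injEq _ _).mp h).symm⟩
  · exact Or.inr (Or.inl ⟨h1, h2, ((Option.some.injEq _ _).mp h).symm⟩)
  · exact Or.inr (Or.inr (Or.inl ⟨by omega, h3, h4, ((Option.some.injEq _ _).mp h).symm⟩))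
  · exact Or.inr (Or.inr (Or.inr ⟨by omega, h3, h4, ((Option.some.injEq _ _).mp h).symm⟩))

lemma gear_rowset {μ t : ℕ} (hμ : 2 ≤ μ) (ht : 1 ≤ t) (m : Fin μ) (i : Fin (μ+1)) :
    {s | ∃ j, gearT μ t m i j = some s}
      = {s : ℕ | s < (μ+t)+(μ-1) ∧ ((i : ℕ) < μ ∨ s < μ+t)} := by
  ext s
  simp only [Set.mem_setOf_eq]
  constructor
  · rintro ⟨j, hj⟩
    have hjlt := j.isLt
    rcases gear_val hj with ⟨h1, h2, rfl⟩ | ⟨h1, h2, rfl⟩ | ⟨h1, h2, h3, rfl⟩ |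
        ⟨h1, h2, h3, rfl⟩
    · have hb : ((j:ℕ) + t + 1) % (μ+t) < μ+t := Nat.mod_lt _ (by omega)
      have him : (i:ℕ) = (m:ℕ) := by
        rcases r1_char i.isLt m.isLt with ⟨e, hc⟩ | ⟨e, hc⟩ <;> omega
      have : (i:ℕ) < μ := by have := m.isLt; omega
      omega
    · have hb : ((j:ℕ) + ((i:ℕ) + (μ+1) - (m:ℕ)) % (μ+1)) % (μ+t) < μ+t :=
        Nat.mod_lt _ (by omega)
      omega
    · omega
    · have hb : (((i:ℕ) + μ - (m:ℕ)) % μ - 1 + ((j:ℕ) - (μ+t))) % (μ-1) < μ-1 :=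
        Nat.mod_lt _ (by omega)
      omega
  · rintro ⟨hs1, hs2⟩
    by_cases him : (i:ℕ) = (m:ℕ)
    · have hiμ : (i:ℕ) < μ := by have := m.isLt; omega
      have hR1 : ((i:ℕ) + (μ+1) - (m:ℕ)) % (μ+1) = 0 := by
        rcases r1_char i.isLt m.isLt with ⟨e, hc⟩ | ⟨e, hc⟩ <;> omega
      have hR2 : ((i:ℕ) + μ - (m:ℕ)) % μ = 0 := by
        rcases r2_char hiμ m.isLt with ⟨e, hc⟩ | ⟨e, hc⟩ <;> omega
      by_cases hs : s < μ-1
      · refine ⟨⟨(μ+t) + s, by omega⟩, ?_⟩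
        unfold gearT
        rw [if_neg (by simp), if_pos hiμ, if_pos hR2]
        exact congrArg some (by show μ+t+s - (μ+t) = s; omega)
      · obtain ⟨x, hxlt, hxe⟩ := exists_shift (c := t + 1)
          (show s - (μ-1) < μ+t by omega)
        refine ⟨⟨x, by omega⟩, ?_⟩
        unfold gearT
        rw [if_pos (show x < μ+t from hxlt), if_pos hR1]
        refine congrArg some ?_
        show (μ-1) + ((x + t + 1) % (μ+t)) = s
        have hxe' : (x + t + 1) % (μ+t) = s - (μ-1) := by rw [Nat.add_assoc]; exact hxe
        omega
    · have hR1 : ((i:ℕ) + (μ+1) - (m:ℕ)) % (μ+1) ≠ 0 := by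
        rcases r1_char i.isLt m.isLt with ⟨e, hc⟩ | ⟨e, hc⟩ <;> omega
      by_cases hs : s < μ+t
      · obtain ⟨x, hxlt, hxe⟩ :=
          exists_shift (c := ((i:ℕ) + (μ+1) - (m:ℕ)) % (μ+1)) hs
        refine ⟨⟨x, by omega⟩, ?_⟩
        unfold gearT
        rw [if_pos (show x < μ+t from hxlt), if_neg hR1]
        exact congrArg some hxe
      · have hiμ : (i:ℕ) < μ := by omega
        have hR2 : ((i:ℕ) + μ - (m:ℕ)) % μ ≠ 0 := by
          rcases r2_char hiμ m.isLt with ⟨e, hc⟩ | ⟨e, hc⟩ <;> omega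
        obtain ⟨x, hxlt, hxe⟩ := exists_shift (c := ((i:ℕ) + μ - (m:ℕ)) % μ - 1)
          (show s - (μ+t) < μ-1 by omega)
        refine ⟨⟨(μ+t) + x, by omega⟩, ?_⟩
        unfold gearT
        rw [if_neg (by simp), if_pos hiμ, if_neg hR2]
        refine congrArg some ?_
        show (μ+t) + ((((i:ℕ) + μ - (m:ℕ)) % μ - 1 + ((μ+t) + x - (μ+t))) % (μ-1)) = s
        have h5 : (μ+t) + x - (μ+t) = x := by omega
        rw [h5, Nat.add_comm (((i:ℕ) + μ - (m:ℕ)) % μ - 1) x, hxe]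
        omega

lemma gear_colset {μ t : ℕ} (hμ : 2 ≤ μ) (ht : 1 ≤ t) (m : Fin μ)
    (j : Fin ((μ+t)+(μ-1))) :
    {s | ∃ i, gearT μ t m i j = some s}
      = if (j : ℕ) < μ+t then
          {s : ℕ | s = (μ-1) + (((j:ℕ) + t + 1) % (μ+t)) ∨
            ∃ d, 1 ≤ d ∧ d < μ+1 ∧ s = ((j:ℕ) + d) % (μ+t)}
        else
          {s : ℕ | s = (j:ℕ) - (μ+t) ∨ ∃ e, e < μ-1 ∧ s = (μ+t) + e} := by
  split_ifs with hj
  · ext s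
    simp only [Set.mem_setOf_eq]
    constructor
    · rintro ⟨i, hi⟩
      rcases gear_val hi with ⟨h1, h2, rfl⟩ | ⟨h1, h2, rfl⟩ | ⟨h1, h2, h3, rfl⟩ |
          ⟨h1, h2, h3, rfl⟩
      · exact Or.inl rfl
      · refine Or.inr ⟨((i:ℕ) + (μ+1) - (m:ℕ)) % (μ+1), by omega,
          Nat.mod_lt _ (by omega), rfl⟩
      · omega
      · omega
    · rintro (rfl | ⟨d, hd1, hd2, rfl⟩)
      · refine ⟨⟨(m:ℕ), by omega⟩, ?_⟩
        have hR1 : (((m:ℕ)) + (μ+1) - (m:ℕ)) % (μ+1) = 0 := by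
          rcases r1_char (show (m:ℕ) < μ+1 by omega) m.isLt with ⟨e, hc⟩ | ⟨e, hc⟩ <;> omega
        unfold gearT
        rw [if_pos hj]
        rw [show ((⟨(m:ℕ), by omega⟩ : Fin (μ+1)) : ℕ) = (m:ℕ) from rfl, if_pos hR1]
      · by_cases hc : (m:ℕ) + d < μ+1
        · refine ⟨⟨(m:ℕ) + d, hc⟩, ?_⟩
          have hR1 : (((m:ℕ) + d) + (μ+1) - (m:ℕ)) % (μ+1) = d := by
            rcases r1_char hc m.isLt with ⟨e, hcc⟩ | ⟨e, hcc⟩ <;> omega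
          unfold gearT
          rw [if_pos hj]
          rw [show ((⟨(m:ℕ) + d, hc⟩ : Fin (μ+1)) : ℕ) = (m:ℕ) + d from rfl, hR1,
            if_neg (by omega)]
        · have hc2 : (m:ℕ) + d - (μ+1) < μ+1 := by omega
          refine ⟨⟨(m:ℕ) + d - (μ+1), hc2⟩, ?_⟩
          have hR1 : (((m:ℕ) + d - (μ+1)) + (μ+1) - (m:ℕ)) % (μ+1) = d := by
            rcases r1_char hc2 m.isLt with ⟨e, hcc⟩ | ⟨e, hcc⟩ <;> omega
          unfold gearT
          rw [if_pos hj]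
          rw [show ((⟨(m:ℕ) + d - (μ+1), hc2⟩ : Fin (μ+1)) : ℕ) = (m:ℕ) + d - (μ+1)
            from rfl, hR1, if_neg (by omega)]
  · ext s
    simp only [Set.mem_setOf_eq]
    constructor
    · rintro ⟨i, hi⟩
      rcases gear_val hi with ⟨h1, h2, rfl⟩ | ⟨h1, h2, rfl⟩ | ⟨h1, h2, h3, rfl⟩ |
          ⟨h1, h2, h3, rfl⟩
      · omega
      · omega
      · exact Or.inl rfl
      · refine Or.inr ⟨_, Nat.mod_lt _ (by omega), rfl⟩
    · rintro (rfl | ⟨e, he, rfl⟩)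
      · refine ⟨⟨(m:ℕ), by omega⟩, ?_⟩
        have hR2 : (((m:ℕ)) + μ - (m:ℕ)) % μ = 0 := by
          rcases r2_char m.isLt m.isLt with ⟨e, hc⟩ | ⟨e, hc⟩ <;> omega
        unfold gearT
        rw [if_neg hj]
        rw [show ((⟨(m:ℕ), by omega⟩ : Fin (μ+1)) : ℕ) = (m:ℕ) from rfl,
          if_pos m.isLt, if_pos hR2]
      · obtain ⟨d, hdlt, hde⟩ := exists_shift (c := (j:ℕ) - (μ+t)) he
        by_cases hc : (m:ℕ) + d + 1 < μ
        · refine ⟨⟨(m:ℕ) + d + 1, by omega⟩, ?_⟩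
          have hR2 : (((m:ℕ) + d + 1) + μ - (m:ℕ)) % μ = d + 1 := by
            rcases r2_char hc m.isLt with ⟨e', hcc⟩ | ⟨e', hcc⟩ <;> omega
          unfold gearT
          rw [if_neg hj]
          rw [show ((⟨(m:ℕ) + d + 1, by omega⟩ : Fin (μ+1)) : ℕ) = (m:ℕ) + d + 1
            from rfl, if_pos (by omega : (m:ℕ) + d + 1 < μ), hR2, if_neg (by omega)]
          refine congrArg some ?_
          have h6 : d + 1 - 1 = d := by omega
          rw [h6, hde]
        · have hc2 : (m:ℕ) + d + 1 - μ < μ := by omega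
          refine ⟨⟨(m:ℕ) + d + 1 - μ, by omega⟩, ?_⟩
          have hR2 : (((m:ℕ) + d + 1 - μ) + μ - (m:ℕ)) % μ = d + 1 := by
            rcases r2_char hc2 m.isLt with ⟨e', hcc⟩ | ⟨e', hcc⟩ <;> omega
          unfold gearT
          rw [if_neg hj]
          rw [show ((⟨(m:ℕ) + d + 1 - μ, by omega⟩ : Fin (μ+1)) : ℕ) = (m:ℕ) + d + 1 - μ
            from rfl, if_pos (by omega : (m:ℕ) + d + 1 - μ < μ), hR2, if_neg (by omega)]
          refine congrArg some ?_
          have h6 : d + 1 - 1 = d := by omega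
          rw [h6, hde]

lemma gear_trade {μ t : ℕ} (hμ : 2 ≤ μ) (ht : 1 ≤ t) :
    IsMuWayLatinTrade (gearT μ t) := by
  have hμ1 : 1 ≤ μ := by omega
  refine ⟨?_, ?_, ?_, ?_, ?_⟩
  · -- each is a partial latin rectangle
    intro m
    constructor
    · -- row injectivity
      intro i j₁ j₂ s h1 h2
      have hb1 := j₁.isLt
      have hb2 := j₂.isLt
      have hchar1 := r1_char i.isLt m.isLt
      rcases gear_val h1 with ⟨p1, q1, v1⟩ | ⟨p1, q1, v1⟩ | ⟨p1, pi1, q1, v1⟩ |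
          ⟨p1, pi1, q1, v1⟩ <;>
        rcases gear_val h2 with ⟨p2, q2, v2⟩ | ⟨p2, q2, v2⟩ | ⟨p2, pi2, q2, v2⟩ |
          ⟨p2, pi2, q2, v2⟩
      · -- AT AT
        have e2 : ((j₁:ℕ)+t+1) % (μ+t) = ((j₂:ℕ)+t+1) % (μ+t) := by omega
        have e3 : ((j₁:ℕ) + (t+1)) % (μ+t) = ((j₂:ℕ) + (t+1)) % (μ+t) := by
          rw [← Nat.add_assoc, ← Nat.add_assoc]; exact e2
        exact Fin.ext (nat_mod_cancel p1 p2 e3)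
      · exact absurd q1 q2
      · -- AT BT
        omega
      · -- AT BN : R1 = 0 but R2 ≠ 0
        rcases hchar1 with ⟨e, hc⟩ | ⟨e, hc⟩ <;>
          rcases r2_char pi2 m.isLt with ⟨e', hc'⟩ | ⟨e', hc'⟩ <;> omega
      · exact absurd q2 q1
      · -- AN AN
        have e2 : ((j₁:ℕ) + ((i:ℕ) + (μ+1) - (m:ℕ)) % (μ+1)) % (μ+t)
            = ((j₂:ℕ) + ((i:ℕ) + (μ+1) - (m:ℕ)) % (μ+1)) % (μ+t) := by omega
        exact Fin.ext (nat_mod_cancel p1 p2 e2)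
      · -- AN BT : R1 ≠ 0 but R2 = 0
        rcases hchar1 with ⟨e, hc⟩ | ⟨e, hc⟩ <;>
          rcases r2_char pi2 m.isLt with ⟨e', hc'⟩ | ⟨e', hc'⟩ <;> omega
      · -- AN BN : values in disjoint ranges
        have hlt : ((j₁:ℕ) + ((i:ℕ) + (μ+1) - (m:ℕ)) % (μ+1)) % (μ+t) < μ+t :=
          Nat.mod_lt _ (by omega)
        omega
      · -- BT AT
        omega
      · -- BT AN
        rcases hchar1 with ⟨e, hc⟩ | ⟨e, hc⟩ <;>
          rcases r2_char pi1 m.isLt with ⟨e', hc'⟩ | ⟨e', hc'⟩ <;> omega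
      · -- BT BT
        exact Fin.ext (by omega)
      · exact absurd q1 q2
      · -- BN AT
        rcases hchar1 with ⟨e, hc⟩ | ⟨e, hc⟩ <;>
          rcases r2_char pi1 m.isLt with ⟨e', hc'⟩ | ⟨e', hc'⟩ <;> omega
      · -- BN AN
        have hlt : ((j₂:ℕ) + ((i:ℕ) + (μ+1) - (m:ℕ)) % (μ+1)) % (μ+t) < μ+t :=
          Nat.mod_lt _ (by omega)
        omega
      · exact absurd q2 q1
      · -- BN BN
        have hk1 : (j₁:ℕ) - (μ+t) < μ-1 := by omega
        have hk2 : (j₂:ℕ) - (μ+t) < μ-1 := by omega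
        have e2 : (((i:ℕ) + μ - (m:ℕ)) % μ - 1 + ((j₁:ℕ) - (μ+t))) % (μ-1)
            = (((i:ℕ) + μ - (m:ℕ)) % μ - 1 + ((j₂:ℕ) - (μ+t))) % (μ-1) := by omega
        have e3 : (((j₁:ℕ) - (μ+t)) + (((i:ℕ) + μ - (m:ℕ)) % μ - 1)) % (μ-1)
            = (((j₂:ℕ) - (μ+t)) + (((i:ℕ) + μ - (m:ℕ)) % μ - 1)) % (μ-1) := by
          rw [Nat.add_comm ((j₁:ℕ) - (μ+t)), Nat.add_comm ((j₂:ℕ) - (μ+t))]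
          exact e2
        have := nat_mod_cancel hk1 hk2 e3
        exact Fin.ext (by omega)
    · -- column injectivity
      intro i₁ i₂ j s h1 h2
      have hc1 := r1_char i₁.isLt m.isLt
      have hc2 := r1_char i₂.isLt m.isLt
      rcases gear_val h1 with ⟨p1, q1, v1⟩ | ⟨p1, q1, v1⟩ | ⟨p1, pi1, q1, v1⟩ |
          ⟨p1, pi1, q1, v1⟩ <;>
        rcases gear_val h2 with ⟨p2, q2, v2⟩ | ⟨p2, q2, v2⟩ | ⟨p2, pi2, q2, v2⟩ |
          ⟨p2, pi2, q2, v2⟩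
      · -- AT AT : both rows equal m
        refine Fin.ext ?_
        rcases hc1 with ⟨e, hcc⟩ | ⟨e, hcc⟩ <;> rcases hc2 with ⟨e', hcc'⟩ | ⟨e', hcc'⟩ <;>
          omega
      · -- AT AN : teeth collision impossible
        have e : (μ-1) + (((j:ℕ)+t+1) % (μ+t))
            = ((j:ℕ) + ((i₂:ℕ) + (μ+1) - (m:ℕ)) % (μ+1)) % (μ+t) := by omega
        have hr1 : 1 ≤ ((i₂:ℕ) + (μ+1) - (m:ℕ)) % (μ+1) := by omega
        have hr2 : ((i₂:ℕ) + (μ+1) - (m:ℕ)) % (μ+1) ≤ μ := by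
          rcases hc2 with ⟨e', hcc'⟩ | ⟨e', hcc'⟩ <;> omega
        exact absurd e (teeth_ne hμ1 ht p1 hr1 hr2)
      · omega
      · omega
      · -- AN AT
        have e : (μ-1) + (((j:ℕ)+t+1) % (μ+t))
            = ((j:ℕ) + ((i₁:ℕ) + (μ+1) - (m:ℕ)) % (μ+1)) % (μ+t) := by omega
        have hr1 : 1 ≤ ((i₁:ℕ) + (μ+1) - (m:ℕ)) % (μ+1) := by omega
        have hr2 : ((i₁:ℕ) + (μ+1) - (m:ℕ)) % (μ+1) ≤ μ := by
          rcases hc1 with ⟨e', hcc'⟩ | ⟨e', hcc'⟩ <;> omega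
        exact absurd e (teeth_ne hμ1 ht p1 hr1 hr2)
      · -- AN AN
        have ha1 : ((i₁:ℕ) + (μ+1) - (m:ℕ)) % (μ+1) < μ+t := by
          rcases hc1 with ⟨e, hcc⟩ | ⟨e, hcc⟩ <;> omega
        have ha2 : ((i₂:ℕ) + (μ+1) - (m:ℕ)) % (μ+1) < μ+t := by
          rcases hc2 with ⟨e, hcc⟩ | ⟨e, hcc⟩ <;> omega
        have e2 : (((i₁:ℕ) + (μ+1) - (m:ℕ)) % (μ+1) + (j:ℕ)) % (μ+t)
            = (((i₂:ℕ) + (μ+1) - (m:ℕ)) % (μ+1) + (j:ℕ)) % (μ+t) := by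
          rw [Nat.add_comm _ (j:ℕ), Nat.add_comm _ (j:ℕ)]; omega
        have e3 := nat_mod_cancel ha1 ha2 e2
        refine Fin.ext ?_
        rcases hc1 with ⟨e, hcc⟩ | ⟨e, hcc⟩ <;> rcases hc2 with ⟨e', hcc'⟩ | ⟨e', hcc'⟩ <;>
          omega
      · omega
      · omega
      · omega
      · omega
      · -- BT BT
        refine Fin.ext ?_
        rcases r2_char pi1 m.isLt with ⟨e, hcc⟩ | ⟨e, hcc⟩ <;>
          rcases r2_char pi2 m.isLt with ⟨e', hcc'⟩ | ⟨e', hcc'⟩ <;> omega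
      · -- BT BN : disjoint values
        have hlt : (((i₂:ℕ) + μ - (m:ℕ)) % μ - 1 + ((j:ℕ) - (μ+t))) % (μ-1) < μ-1 :=
          Nat.mod_lt _ (by omega)
        omega
      · omega
      · omega
      · -- BN BT
        have hlt : (((i₁:ℕ) + μ - (m:ℕ)) % μ - 1 + ((j:ℕ) - (μ+t))) % (μ-1) < μ-1 :=
          Nat.mod_lt _ (by omega)
        omega
      · -- BN BN
        have hd1 := r2_char pi1 m.isLt
        have hd2 := r2_char pi2 m.isLt
        have ha1 : ((i₁:ℕ) + μ - (m:ℕ)) % μ - 1 < μ-1 := by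
          rcases hd1 with ⟨e, hcc⟩ | ⟨e, hcc⟩ <;> omega
        have ha2 : ((i₂:ℕ) + μ - (m:ℕ)) % μ - 1 < μ-1 := by
          rcases hd2 with ⟨e, hcc⟩ | ⟨e, hcc⟩ <;> omega
        have e2 : (((i₁:ℕ) + μ - (m:ℕ)) % μ - 1 + ((j:ℕ) - (μ+t))) % (μ-1)
            = (((i₂:ℕ) + μ - (m:ℕ)) % μ - 1 + ((j:ℕ) - (μ+t))) % (μ-1) := by omega
        have e3 := nat_mod_cancel ha1 ha2 e2
        refine Fin.ext ?_
        rcases hd1 with ⟨e, hcc⟩ | ⟨e, hcc⟩ <;> rcases hd2 with ⟨e', hcc'⟩ | ⟨e', hcc'⟩ <;>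
          omega
  · -- same filled cells
    intro m m' i j h
    rw [gear_shape] at h ⊢
    exact h
  · -- pairwise distinct entries
    intro m m' i j hne h heq
    obtain ⟨x, hx⟩ := Option.isSome_iff_exists.mp h
    have hx' : gearT μ t m' i j = some x := by rw [← heq]; exact hx
    have hc1 := r1_char i.isLt m.isLt
    have hc2 := r1_char i.isLt m'.isLt
    rcases gear_val hx with ⟨p1, q1, v1⟩ | ⟨p1, q1, v1⟩ | ⟨p1, pi1, q1, v1⟩ |
        ⟨p1, pi1, q1, v1⟩ <;>
      rcases gear_val hx' with ⟨p2, q2, v2⟩ | ⟨p2, q2, v2⟩ | ⟨p2, pi2, q2, v2⟩ |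
        ⟨p2, pi2, q2, v2⟩
    · -- AT AT
      refine hne (Fin.ext ?_)
      rcases hc1 with ⟨e, hcc⟩ | ⟨e, hcc⟩ <;> rcases hc2 with ⟨e', hcc'⟩ | ⟨e', hcc'⟩ <;>
        omega
    · -- AT AN
      have e : (μ-1) + (((j:ℕ)+t+1) % (μ+t))
          = ((j:ℕ) + ((i:ℕ) + (μ+1) - (m':ℕ)) % (μ+1)) % (μ+t) := by omega
      have hr1 : 1 ≤ ((i:ℕ) + (μ+1) - (m':ℕ)) % (μ+1) := by omega
      have hr2 : ((i:ℕ) + (μ+1) - (m':ℕ)) % (μ+1) ≤ μ := by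
        rcases hc2 with ⟨e', hcc'⟩ | ⟨e', hcc'⟩ <;> omega
      exact absurd e (teeth_ne hμ1 ht p1 hr1 hr2)
    · omega
    · omega
    · -- AN AT
      have e : (μ-1) + (((j:ℕ)+t+1) % (μ+t))
          = ((j:ℕ) + ((i:ℕ) + (μ+1) - (m:ℕ)) % (μ+1)) % (μ+t) := by omega
      have hr1 : 1 ≤ ((i:ℕ) + (μ+1) - (m:ℕ)) % (μ+1) := by omega
      have hr2 : ((i:ℕ) + (μ+1) - (m:ℕ)) % (μ+1) ≤ μ := by
        rcases hc1 with ⟨e', hcc'⟩ | ⟨e', hcc'⟩ <;> omega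
      exact absurd e (teeth_ne hμ1 ht p1 hr1 hr2)
    · -- AN AN
      have ha1 : ((i:ℕ) + (μ+1) - (m:ℕ)) % (μ+1) < μ+t := by
        rcases hc1 with ⟨e, hcc⟩ | ⟨e, hcc⟩ <;> omega
      have ha2 : ((i:ℕ) + (μ+1) - (m':ℕ)) % (μ+1) < μ+t := by
        rcases hc2 with ⟨e, hcc⟩ | ⟨e, hcc⟩ <;> omega
      have e2 : (((i:ℕ) + (μ+1) - (m:ℕ)) % (μ+1) + (j:ℕ)) % (μ+t)
          = (((i:ℕ) + (μ+1) - (m':ℕ)) % (μ+1) + (j:ℕ)) % (μ+t) := by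
        rw [Nat.add_comm _ (j:ℕ), Nat.add_comm _ (j:ℕ)]; omega
      have e3 := nat_mod_cancel ha1 ha2 e2
      refine hne (Fin.ext ?_)
      rcases hc1 with ⟨e, hcc⟩ | ⟨e, hcc⟩ <;> rcases hc2 with ⟨e', hcc'⟩ | ⟨e', hcc'⟩ <;>
        omega
    · omega
    · omega
    · omega
    · omega
    · -- BT BT
      refine hne (Fin.ext ?_)
      rcases r2_char pi1 m.isLt with ⟨e, hcc⟩ | ⟨e, hcc⟩ <;>
        rcases r2_char pi2 m'.isLt with ⟨e', hcc'⟩ | ⟨e', hcc'⟩ <;> omega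
    · -- BT BN
      have hlt : (((i:ℕ) + μ - (m':ℕ)) % μ - 1 + ((j:ℕ) - (μ+t))) % (μ-1) < μ-1 :=
        Nat.mod_lt _ (by omega)
      have hb := j.isLt
      omega
    · omega
    · omega
    · -- BN BT
      have hlt : (((i:ℕ) + μ - (m:ℕ)) % μ - 1 + ((j:ℕ) - (μ+t))) % (μ-1) < μ-1 :=
        Nat.mod_lt _ (by omega)
      have hb := j.isLt
      omega
    · -- BN BN
      have hd1 := r2_char pi1 m.isLt
      have hd2 := r2_char pi2 m'.isLt
      have ha1 : ((i:ℕ) + μ - (m:ℕ)) % μ - 1 < μ-1 := by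
        rcases hd1 with ⟨e, hcc⟩ | ⟨e, hcc⟩ <;> omega
      have ha2 : ((i:ℕ) + μ - (m':ℕ)) % μ - 1 < μ-1 := by
        rcases hd2 with ⟨e, hcc⟩ | ⟨e, hcc⟩ <;> omega
      have e2 : (((i:ℕ) + μ - (m:ℕ)) % μ - 1 + ((j:ℕ) - (μ+t))) % (μ-1)
          = (((i:ℕ) + μ - (m':ℕ)) % μ - 1 + ((j:ℕ) - (μ+t))) % (μ-1) := by omega
      have e3 := nat_mod_cancel ha1 ha2 e2
      refine hne (Fin.ext ?_)
      rcases hd1 with ⟨e, hcc⟩ | ⟨e, hcc⟩ <;> rcases hd2 with ⟨e', hcc'⟩ | ⟨e', hcc'⟩ <;>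
        omega
  · intro m m' i
    rw [gear_rowset hμ ht, gear_rowset hμ ht]
  · intro m m' j
    rw [gear_colset hμ ht, gear_colset hμ ht]

lemma combo_vol {μ a w : ℕ} (hμ : 1 ≤ μ) :
    tradeVolume (comboT μ a w) = (μ+1) * a + μ * w := by
  apply vol_shape
  intro i j
  constructor
  · rintro ⟨m, hm⟩
    exact (combo_shape m i j).mp hm
  · intro h
    exact ⟨⟨0, by omega⟩, (combo_shape _ i j).mpr h⟩

lemma gear_vol {μ t : ℕ} (hμ : 1 ≤ μ) :
    tradeVolume (gearT μ t) = (μ+1) * (μ+t) + μ * (μ-1) := by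
  apply vol_shape
  intro i j
  constructor
  · rintro ⟨m, hm⟩
    exact (gear_shape m i j).mp hm
  · intro h
    exact ⟨⟨0, by omega⟩, (gear_shape _ i j).mpr h⟩

theorem stmt_17 (μ i : ℕ) (hμ : 2 ≤ μ) (hi : i ≤ μ) (s : ℕ)
    (hs1 : μ * (3 * μ - i) ≤ s) (hs2 : s ≤ μ * (3 * μ - i) + (μ - i)) :
    ∃ (r c : ℕ) (T : Fin μ → Fin r → Fin c → Option ℕ),
      IsMuWayLatinTrade T ∧ tradeVolume T = s := by
  obtain ⟨k, hk⟩ : ∃ k, μ = i + k := ⟨μ - i, by omega⟩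
  have h3 : 3 * μ - i = 2 * μ + k := by omega
  have hki : μ - i = k := by omega
  rw [h3] at hs1 hs2
  rw [hki] at hs2
  set Q := μ * (2 * μ + k) with hQ
  set t := s - Q with htdef
  have hst : s = Q + t := by omega
  have htk : t ≤ k := by omega
  rcases Nat.lt_trichotomy t k with hlt | heq | hgt
  · rcases Nat.eq_zero_or_pos t with ht0 | htpos
    · -- t = 0 : a single μ × (2μ+k) rectangle
      refine ⟨μ+1, 0 + (2*μ+k), comboT μ 0 (2*μ+k),
        combo_trade (by omega) (Or.inl rfl) (Or.inr (by omega)), ?_⟩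
      rw [combo_vol (by omega)]
      have : (μ+1) * 0 + μ * (2*μ+k) = Q := by rw [hQ]; ring
      omega
    · -- 0 < t < k : two rectangles
      obtain ⟨d, hd⟩ : ∃ d, k = t + 1 + d := ⟨k - t - 1, by omega⟩
      refine ⟨μ+1, (μ+t) + (μ+d), comboT μ (μ+t) (μ+d),
        combo_trade (by omega) (Or.inr (by omega)) (Or.inr (by omega)), ?_⟩
      rw [combo_vol (by omega)]
      have : (μ+1) * (μ+t) + μ * (μ+d) = μ * (2*μ + (t + 1 + d)) + t := by ring
      rw [this, ← hd, ← hQ, ← hst]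
  · -- t = k ≥ 1 (if k = 0 this is the t = 0 case, handled separately below)
    rcases Nat.eq_zero_or_pos t with ht0 | htpos
    · refine ⟨μ+1, 0 + (2*μ+k), comboT μ 0 (2*μ+k),
        combo_trade (by omega) (Or.inl rfl) (Or.inr (by omega)), ?_⟩
      rw [combo_vol (by omega)]
      have : (μ+1) * 0 + μ * (2*μ+k) = Q := by rw [hQ]; ring
      omega
    · -- the gear trade
      refine ⟨μ+1, (μ+t) + (μ-1), gearT μ t,
        gear_trade hμ htpos, ?_⟩
      rw [gear_vol (by omega)]
      obtain ⟨e, he⟩ : ∃ e, μ = e + 1 := ⟨μ - 1, by omega⟩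
      have he1 : μ - 1 = e := by omega
      have hvol : (μ+1) * (μ+t) + μ * (μ-1) = Q + t := by
        rw [hQ, he1, he, ← heq]; ring
      rw [hvol, ← hst]
  · omega
end

section
/- For every μ ≥ 2 and every integer s ≥ 3μ² − μ, there exists a μ-way latin trade of volume s. -/
/-!
Block-diagonal sums of μ-way trades are trades, with volumes adding, and the cyclic `r × n`
array with entries `(j + (i + m) % r) % n` in layer `m` is a μ-way trade of volume `r * n`
whenever `μ ≤ r ≤ n`. Writing `s = μ q + t` with `t < μ`, a volume `s ≥ 3μ² - μ` is either
`μ q`, or `(μ + 1)(μ + t) + μ a` with `a ≥ μ`, or the single exceptional value `3μ² - 1`. The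
latter is `μ²` plus the volume `2μ² - 1` of a special trade: a `(μ + 1) × (2μ - 1)` array with
`μ` holes on its diagonal.
-/

open Finset

lemma Nat.mod_eq_self_or_sub_of_lt_two_mul {x n : ℕ} (h : x < 2 * n) :
    x < n ∧ x % n = x ∨ n ≤ x ∧ x % n = x - n := by
  rcases Nat.lt_or_ge x n with hx | hx
  · exact .inl ⟨hx, Nat.mod_eq_of_lt hx⟩
  · exact .inr ⟨hx, by rw [Nat.mod_eq_sub_mod hx, Nat.mod_eq_of_lt (by omega)]⟩

lemma Fin.exists_fin_add {m n : ℕ} (P : Fin (m + n) → Prop) :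
    (∃ i, P i) ↔ (∃ i, P (Fin.castAdd n i)) ∨ ∃ j, P (Fin.natAdd m j) := by
  refine ⟨fun ⟨i, hi⟩ => ?_, by rintro (⟨i, hi⟩ | ⟨i, hi⟩) <;> exact ⟨_, hi⟩⟩
  induction i using Fin.addCases
  exacts [.inl ⟨_, hi⟩, .inr ⟨_, hi⟩]

lemma Fin.card_filter_val_ne {n a : ℕ} (h : a < n) : #{j : Fin n | (j : ℕ) ≠ a} = n - 1 := by
  rw [filter_congr (q := (· ≠ ⟨a, h⟩)) fun j _ => by simp [Fin.ext_iff], filter_ne',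
    card_erase_of_mem (mem_univ _), card_univ, Fintype.card_fin]

lemma setOf_eq_some_eq_of_card_le {ι : Type*} [Fintype ι] (f : ι → Option ℕ) (S : Finset ℕ)
    (hmaps : ∀ j v, f j = some v → v ∈ S)
    (hinj : ∀ j₁ j₂ v, f j₁ = some v → f j₂ = some v → j₁ = j₂)
    (hcard : #S ≤ #{j | (f j).isSome}) :
    {v | ∃ j, f j = some v} = S := by
  set I := univ.filterMap f hinj
  have hI : ∀ v, v ∈ I ↔ ∃ j, f j = some v := by simp [I]
  have hIS : I ⊆ S := fun v hv => by
    obtain ⟨j, hj⟩ := (hI v).1 hv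
    exact hmaps j v hj
  have hfilled_le : #{j | (f j).isSome} ≤ #I := by
    refine card_le_card_of_injOn (fun j => (f j).getD 0) (fun j hj => ?_)
      fun j₁ hj₁ j₂ hj₂ h => ?_
    · obtain ⟨v, hv⟩ := Option.isSome_iff_exists.1 (mem_filter.1 hj).2
      simpa [hv] using (hI v).2 ⟨j, hv⟩
    · obtain ⟨v₁, hv₁⟩ := Option.isSome_iff_exists.1 (mem_filter.1 hj₁).2
      obtain ⟨v₂, hv₂⟩ := Option.isSome_iff_exists.1 (mem_filter.1 hj₂).2
      simp only [hv₁, hv₂, Option.getD_some] at h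
      exact hinj j₁ j₂ v₁ hv₁ (h ▸ hv₂)
  ext v
  simp [← hI, eq_of_subset_of_card_le hIS (hcard.trans hfilled_le)]

theorem isMuWayLatinTrade_of_card {μ r n : ℕ} {T : Fin μ → Fin r → Fin n → Option ℕ}
    (R : Fin r → Finset ℕ) (C : Fin n → Finset ℕ)
    (hfilled : ∀ m m' i j, (T m i j).isSome → (T m' i j).isSome)
    (hrow : ∀ m i j₁ j₂ v, T m i j₁ = some v → T m i j₂ = some v → j₁ = j₂)
    (hcol : ∀ m i₁ i₂ j v, T m i₁ j = some v → T m i₂ j = some v → i₁ = i₂)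
    (hcell : ∀ m m' i j v, T m i j = some v → T m' i j = some v → m = m')
    (hR : ∀ m i j v, T m i j = some v → v ∈ R i)
    (hRcard : ∀ m i, #(R i) ≤ #{j | (T m i j).isSome})
    (hC : ∀ m i j v, T m i j = some v → v ∈ C j)
    (hCcard : ∀ m j, #(C j) ≤ #{i | (T m i j).isSome}) :
    IsMuWayLatinTrade T := by
  have hrowSet m i : {v | ∃ j, T m i j = some v} = R i :=
    setOf_eq_some_eq_of_card_le _ _ (hR m i) (hrow m i) (hRcard m i)
  have hcolSet m j : {v | ∃ i, T m i j = some v} = C j :=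
    setOf_eq_some_eq_of_card_le (T m · j) _ (fun i => hC m i j) (fun i₁ i₂ => hcol m i₁ i₂ j)
      (hCcard m j)
  refine ⟨fun m => ⟨hrow m, hcol m⟩, hfilled, fun m m' i j hm hsome heq => hm ?_,
    fun m m' i => by rw [hrowSet, hrowSet], fun m m' j => by rw [hcolSet, hcolSet]⟩
  obtain ⟨v, hv⟩ := Option.isSome_iff_exists.1 hsome
  exact hcell m m' i j v hv (heq ▸ hv)

lemma tradeVolume_eq_sum {μ r n : ℕ} (T : Fin μ → Fin r → Fin n → Option ℕ) :
    tradeVolume T = ∑ i, ∑ j, if ∃ m, (T m i j).isSome then 1 else 0 := by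
  rw [tradeVolume, card_filter, Fintype.sum_prod_type]

lemma tradeVolume_eq_sum_card {μ r n : ℕ} {T : Fin μ → Fin r → Fin n → Option ℕ}
    (hfilled : ∀ m m' i j, (T m i j).isSome → (T m' i j).isSome) (m₀ : Fin μ) :
    tradeVolume T = ∑ i, #{j | (T m₀ i j).isSome} := by
  simp only [tradeVolume_eq_sum, card_filter]
  refine sum_congr rfl fun i _ => sum_congr rfl fun j _ => ?_
  simp only [show (∃ m, (T m i j).isSome) ↔ (T m₀ i j).isSome from
    ⟨fun ⟨m, h⟩ => hfilled m m₀ i j h, fun h => ⟨m₀, h⟩⟩]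

section Cyclic

variable {μ r n : ℕ}

def cyclicTrade (μ r n : ℕ) : Fin μ → Fin r → Fin n → Option ℕ :=
  fun m i j => some ((j + (i + m) % r) % n)

theorem isMuWayLatinTrade_cyclicTrade (hr : μ ≤ r) (hn : r ≤ n) :
    IsMuWayLatinTrade (cyclicTrade μ r n) := by
  have mod_r (m : Fin μ) (i : Fin r) := Nat.mod_eq_self_or_sub_of_lt_two_mul
    (show (i : ℕ) + m < 2 * r by omega)
  have mod_n (j : Fin n) (m : Fin μ) (i : Fin r) := Nat.mod_eq_self_or_sub_of_lt_two_mul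
    (show j + (i + m : ℕ) % r < 2 * n by have := Nat.mod_lt (i + m : ℕ) i.pos; omega)
  refine isMuWayLatinTrade_of_card (fun _ => range n)
    (fun j => (range r).image fun x => (j + x) % n) (by simp [cyclicTrade])
    ?_ ?_ ?_ ?_ ?_ ?_ ?_
  · intro m i j₁ j₂ v h₁ h₂
    simp only [cyclicTrade, Option.some.injEq] at h₁ h₂
    have := mod_n j₁ m i
    have := mod_n j₂ m i
    exact Fin.ext (by omega)
  · intro m i₁ i₂ j v h₁ h₂
    simp only [cyclicTrade, Option.some.injEq] at h₁ h₂
    have := mod_r m i₁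
    have := mod_r m i₂
    have := mod_n j m i₁
    have := mod_n j m i₂
    exact Fin.ext (by omega)
  · intro m m' i j v h₁ h₂
    simp only [cyclicTrade, Option.some.injEq] at h₁ h₂
    have := mod_r m i
    have := mod_r m' i
    have := mod_n j m i
    have := mod_n j m' i
    exact Fin.ext (by omega)
  · intro m i j v h
    simp only [cyclicTrade, Option.some.injEq] at h
    simpa [← h] using Nat.mod_lt _ j.pos
  · simp [cyclicTrade]
  · intro m i j v h
    simp only [cyclicTrade, Option.some.injEq] at h
    exact mem_image.2 ⟨_, mem_range.2 (Nat.mod_lt _ i.pos), h⟩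
  · intro m j
    simpa [cyclicTrade] using card_image_le.trans (card_range r).le

lemma tradeVolume_cyclicTrade (hμ : 0 < μ) : tradeVolume (cyclicTrade μ r n) = r * n := by
  rw [tradeVolume_eq_sum_card (T := cyclicTrade μ r n) (by simp [cyclicTrade]) ⟨0, hμ⟩]
  simp [cyclicTrade]

end Cyclic

section BlockDiag

variable {μ r₁ c₁ r₂ c₂ : ℕ} {T₁ : Fin μ → Fin r₁ → Fin c₁ → Option ℕ}
  {T₂ : Fin μ → Fin r₂ → Fin c₂ → Option ℕ}

def blockDiag (T₁ : Fin μ → Fin r₁ → Fin c₁ → Option ℕ)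
    (T₂ : Fin μ → Fin r₂ → Fin c₂ → Option ℕ) :
    Fin μ → Fin (r₁ + r₂) → Fin (c₁ + c₂) → Option ℕ := fun m =>
  Fin.addCases (fun i => Fin.addCases (T₁ m i) fun _ => none)
    (fun i => Fin.addCases (fun _ => none) (T₂ m i))

@[simp] lemma blockDiag_castAdd_castAdd (m i j) :
    blockDiag T₁ T₂ m (Fin.castAdd r₂ i) (Fin.castAdd c₂ j) = T₁ m i j := by
  simp [blockDiag]

@[simp] lemma blockDiag_castAdd_natAdd (m i j) :
    blockDiag T₁ T₂ m (Fin.castAdd r₂ i) (Fin.natAdd c₁ j) = none := by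
  simp [blockDiag]

@[simp] lemma blockDiag_natAdd_castAdd (m i j) :
    blockDiag T₁ T₂ m (Fin.natAdd r₁ i) (Fin.castAdd c₂ j) = none := by
  simp [blockDiag]

@[simp] lemma blockDiag_natAdd_natAdd (m i j) :
    blockDiag T₁ T₂ m (Fin.natAdd r₁ i) (Fin.natAdd c₁ j) = T₂ m i j := by
  simp [blockDiag]

theorem IsMuWayLatinTrade.blockDiag (h₁ : IsMuWayLatinTrade T₁) (h₂ : IsMuWayLatinTrade T₂) :
    IsMuWayLatinTrade (blockDiag T₁ T₂) := by
  obtain ⟨hl₁, hf₁, hd₁, hr₁, hc₁⟩ := h₁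
  obtain ⟨hl₂, hf₂, hd₂, hr₂, hc₂⟩ := h₂
  refine ⟨fun m => ⟨fun i j₁ j₂ v => ?_, fun i₁ i₂ j v => ?_⟩, fun m m' i j => ?_,
    fun m m' i j => ?_, fun m m' i => ?_, fun m m' j => ?_⟩
  · induction i using Fin.addCases <;> induction j₁ using Fin.addCases <;>
      induction j₂ using Fin.addCases <;> simp
    · exact (hl₁ m).1 _ _ _ v
    · exact (hl₂ m).1 _ _ _ v
  · induction j using Fin.addCases <;> induction i₁ using Fin.addCases <;>
      induction i₂ using Fin.addCases <;> simp
    · exact (hl₁ m).2 _ _ _ v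
    · exact (hl₂ m).2 _ _ _ v
  · induction i using Fin.addCases <;> induction j using Fin.addCases <;> simp
    · exact hf₁ m m' _ _
    · exact hf₂ m m' _ _
  · induction i using Fin.addCases <;> induction j using Fin.addCases <;> simp
    · exact hd₁ m m' _ _
    · exact hd₂ m m' _ _
  · induction i using Fin.addCases <;> simp [Fin.exists_fin_add]
    · exact hr₁ m m' _
    · exact hr₂ m m' _
  · induction j using Fin.addCases <;> simp [Fin.exists_fin_add]
    · exact hc₁ m m' _
    · exact hc₂ m m' _

lemma tradeVolume_blockDiag :
    tradeVolume (blockDiag T₁ T₂) = tradeVolume T₁ + tradeVolume T₂ := by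
  simp only [tradeVolume_eq_sum, Fin.sum_univ_add, blockDiag_castAdd_castAdd,
    blockDiag_castAdd_natAdd, blockDiag_natAdd_castAdd, blockDiag_natAdd_natAdd]
  simp

end BlockDiag

section Special

variable {μ : ℕ}

/- In layer `m`, column `j < μ` holds the symbol `j` in the row `i ≡ j + m + 1 (mod μ + 1)` and
column `j ≥ μ` holds the symbol `j` in the row `(j + 1 + m - μ) % μ`; the other cells of a column
run cyclically through the symbols `μ, …, 2μ - 2`, respectively `0, …, μ - 1`. -/
def specialTrade (μ : ℕ) : Fin μ → Fin (μ + 1) → Fin (2 * μ - 1) → Option ℕ := fun m i j =>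
  if (j : ℕ) < μ then
    if (i : ℕ) = j then none
    else if (i + μ - j) % (μ + 1) = m then some j
    else some (μ + ((i + μ - j) % (μ + 1) + μ - m - 1) % μ)
  else
    if (i : ℕ) = (j + 1 + m - μ) % μ then some j
    else some ((i + μ - (j + 1 + m - μ) % μ) % (μ + 1))

lemma specialTrade_isSome {m i j} :
    (specialTrade μ m i j).isSome ↔ ¬((i : ℕ) = j ∧ (j : ℕ) < μ) := by
  unfold specialTrade
  split_ifs <;> simp_all

/- The entries described by linear arithmetic, so that the trade axioms reduce to `omega`. -/
lemma specialTrade_eq_some {m i j v} (h : specialTrade μ m i j = some v) :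
    ((j : ℕ) < μ ∧ ∃ d < μ, (d + j = i + μ ∨ d + j + 1 = i) ∧
      (d = m ∧ v = j ∨ m < d ∧ v + m + 1 = μ + d ∨ d < m ∧ v + m + 1 = 2 * μ + d)) ∨
    (μ ≤ (j : ℕ) ∧ ∃ k < μ, (k + μ = j + 1 + m ∨ k + 2 * μ = j + 1 + m) ∧
      ((i : ℕ) = k ∧ v = j ∨ k < i ∧ v + k + 1 = i ∨ (i : ℕ) < k ∧ v + k = i + μ)) := by
  have hi := i.isLt
  have hj := j.isLt
  have hm := m.isLt
  have hd := Nat.mod_eq_self_or_sub_of_lt_two_mul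
    (show (i + μ - j : ℕ) < 2 * (μ + 1) by omega)
  have hk := Nat.mod_eq_self_or_sub_of_lt_two_mul
    (show (j + 1 + m - μ : ℕ) < 2 * μ by omega)
  unfold specialTrade at h
  generalize (i + μ - j : ℕ) % (μ + 1) = d at h hd
  generalize (j + 1 + m - μ : ℕ) % μ = k at h hk
  split_ifs at h with hjμ hij hdm hik <;> simp only [Option.some.injEq] at h
  · exact .inl ⟨hjμ, d, by omega, by omega, .inl ⟨hdm, h.symm⟩⟩
  · have hv := Nat.mod_eq_self_or_sub_of_lt_two_mul (show d + μ - m - 1 < 2 * μ by omega)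
    exact .inl ⟨hjμ, d, by omega, by omega, by omega⟩
  · exact .inr ⟨by omega, k, by omega, by omega, .inl ⟨hik, h.symm⟩⟩
  · have hv := Nat.mod_eq_self_or_sub_of_lt_two_mul
      (show i + μ - k < 2 * (μ + 1) by omega)
    exact .inr ⟨by omega, k, by omega, by omega, by omega⟩

lemma specialTrade_row_injective {m i j₁ j₂ v} (h₁ : specialTrade μ m i j₁ = some v)
    (h₂ : specialTrade μ m i j₂ = some v) : j₁ = j₂ := by
  have := j₁.isLt
  have := j₂.isLt
  rcases specialTrade_eq_some h₁ with ⟨_, d₁, _⟩ | ⟨_, k₁, _⟩ <;>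
    rcases specialTrade_eq_some h₂ with ⟨_, d₂, _⟩ | ⟨_, k₂, _⟩ <;> exact Fin.ext (by omega)

lemma specialTrade_col_injective {m i₁ i₂ j v} (h₁ : specialTrade μ m i₁ j = some v)
    (h₂ : specialTrade μ m i₂ j = some v) : i₁ = i₂ := by
  have := i₁.isLt
  have := i₂.isLt
  rcases specialTrade_eq_some h₁ with ⟨_, d₁, _⟩ | ⟨_, k₁, _⟩ <;>
    rcases specialTrade_eq_some h₂ with ⟨_, d₂, _⟩ | ⟨_, k₂, _⟩ <;> exact Fin.ext (by omega)

lemma specialTrade_layer_injective {m m' i j v} (h₁ : specialTrade μ m i j = some v)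
    (h₂ : specialTrade μ m' i j = some v) : m = m' := by
  have := m.isLt
  have := m'.isLt
  rcases specialTrade_eq_some h₁ with ⟨_, d₁, _⟩ | ⟨_, k₁, _⟩ <;>
    rcases specialTrade_eq_some h₂ with ⟨_, d₂, _⟩ | ⟨_, k₂, _⟩ <;> exact Fin.ext (by omega)

lemma card_specialTrade_row (m : Fin μ) (i : Fin (μ + 1)) :
    #{j | (specialTrade μ m i j).isSome} = if (i : ℕ) < μ then 2 * μ - 2 else 2 * μ - 1 := by
  simp only [specialTrade_isSome]
  split_ifs with hi
  · rw [filter_congr (q := fun j : Fin (2 * μ - 1) => (j : ℕ) ≠ i) (fun j _ => by omega),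
      Fin.card_filter_val_ne (by omega)]
    omega
  · rw [filter_true_of_mem fun j _ => by omega, card_univ, Fintype.card_fin]

lemma card_specialTrade_col (m : Fin μ) (j : Fin (2 * μ - 1)) :
    #{i | (specialTrade μ m i j).isSome} = if (j : ℕ) < μ then μ else μ + 1 := by
  simp only [specialTrade_isSome]
  split_ifs with hj
  · rw [filter_congr (q := fun i : Fin (μ + 1) => (i : ℕ) ≠ j) (fun i _ => by omega),
      Fin.card_filter_val_ne (by omega)]
    omega
  · rw [filter_true_of_mem fun i _ => by omega, card_univ, Fintype.card_fin]

theorem isMuWayLatinTrade_specialTrade : IsMuWayLatinTrade (specialTrade μ) := by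
  refine isMuWayLatinTrade_of_card
    (fun i => if (i : ℕ) < μ then (range (2 * μ - 1)).erase i else range (2 * μ - 1))
    (fun j => insert (j : ℕ) (if (j : ℕ) < μ then Ico μ (2 * μ - 1) else range μ))
    (fun _ _ _ _ => specialTrade_isSome.2 ∘ specialTrade_isSome.1)
    (fun _ _ _ _ _ => specialTrade_row_injective) (fun _ _ _ _ _ => specialTrade_col_injective)
    (fun _ _ _ _ _ => specialTrade_layer_injective) (fun m i j v h => ?_) (fun m i => ?_)
    (fun m i j v h => ?_) (fun m j => ?_)
  · have := j.isLt
    split_ifs <;> simp only [mem_erase, mem_range] <;>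
      rcases specialTrade_eq_some h with ⟨_, d, _⟩ | ⟨_, k, _⟩ <;> omega
  · rw [card_specialTrade_row]
    split_ifs with hi
    · rw [card_erase_of_mem (mem_range.2 (by omega)), card_range]
      omega
    · rw [card_range]
  · have := i.isLt
    split_ifs <;> simp only [mem_insert, mem_Ico, mem_range] <;>
      rcases specialTrade_eq_some h with ⟨_, d, _⟩ | ⟨_, k, _⟩ <;> omega
  · rw [card_specialTrade_col]
    split_ifs with hj
    · rw [card_insert_of_notMem (by rw [mem_Ico]; omega), Nat.card_Ico]
      omega
    · rw [card_insert_of_notMem (by rw [mem_range]; omega), card_range]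

lemma tradeVolume_specialTrade (hμ : 0 < μ) :
    tradeVolume (specialTrade μ) = 2 * μ ^ 2 - 1 := by
  rw [tradeVolume_eq_sum_card (T := specialTrade μ)
      (fun _ _ _ _ => specialTrade_isSome.2 ∘ specialTrade_isSome.1) ⟨0, hμ⟩,
    Fin.sum_univ_castSucc]
  simp only [card_specialTrade_row, Fin.val_castSucc, Fin.is_lt, if_true, Fin.val_last,
    lt_irrefl, if_false, sum_const, card_univ, Fintype.card_fin, smul_eq_mul]
  have : 1 ≤ μ ^ 2 := Nat.one_le_pow _ _ hμ
  zify [show 1 ≤ 2 * μ ^ 2 by omega, show 2 ≤ 2 * μ by omega, show 1 ≤ 2 * μ by omega]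
  ring

end Special

lemma exists_mul_or_eq_three_mul_sq_sub_one_or_exists_add_mul {μ s : ℕ} (hμ : 0 < μ)
    (hs : 3 * μ ^ 2 - μ ≤ s) :
    (∃ q, μ ≤ q ∧ s = μ * q) ∨ s = 3 * μ ^ 2 - 1 ∨
      ∃ t a, 0 < t ∧ t < μ ∧ μ ≤ a ∧ s = (μ + 1) * (μ + t) + μ * a := by
  obtain ⟨q, t, rfl, ht⟩ : ∃ q t, μ * q + t = s ∧ t < μ :=
    ⟨s / μ, s % μ, Nat.div_add_mod s μ, Nat.mod_lt s hμ⟩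
  have hq : 3 * μ - 1 ≤ q := by
    by_contra! hq
    have := Nat.mul_le_mul_left μ (show q ≤ 3 * μ - 2 by omega)
    zify [show 2 ≤ 3 * μ by omega, show μ ≤ 3 * μ ^ 2 by nlinarith] at this hs
    nlinarith
  rcases Nat.eq_zero_or_pos t with rfl | ht₀
  · exact .inl ⟨q, by omega, rfl⟩
  by_cases hexc : t + 1 = μ ∧ q = 3 * μ - 1
  · obtain ⟨rfl, rfl⟩ := hexc
    refine .inr (.inl ?_)
    zify [show 1 ≤ 3 * (t + 1) by omega, show 1 ≤ 3 * (t + 1) ^ 2 by nlinarith]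
    ring
  · obtain ⟨a, rfl⟩ : ∃ a, q = μ + t + 1 + a := ⟨q - (μ + t + 1), by omega⟩
    exact .inr (.inr ⟨t, a, ht₀, ht, by omega, by ring⟩)

theorem stmt_18 (μ s : ℕ) (hμ : 2 ≤ μ) (hs : 3 * μ ^ 2 - μ ≤ s) :
    ∃ (r c : ℕ) (T : Fin μ → Fin r → Fin c → Option ℕ),
      IsMuWayLatinTrade T ∧ tradeVolume T = s := by
  have hμ₀ : 0 < μ := by omega
  rcases exists_mul_or_eq_three_mul_sq_sub_one_or_exists_add_mul hμ₀ hs with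
    ⟨q, hq, rfl⟩ | rfl | ⟨t, a, ht₀, ht, ha, rfl⟩
  · exact ⟨_, _, cyclicTrade μ μ q, isMuWayLatinTrade_cyclicTrade le_rfl hq,
      tradeVolume_cyclicTrade hμ₀⟩
  · refine ⟨_, _, blockDiag (specialTrade μ) (cyclicTrade μ μ μ),
      isMuWayLatinTrade_specialTrade.blockDiag (isMuWayLatinTrade_cyclicTrade le_rfl le_rfl),
      ?_⟩
    rw [tradeVolume_blockDiag, tradeVolume_specialTrade hμ₀, tradeVolume_cyclicTrade hμ₀, ← sq]
    omega
  · refine ⟨_, _, blockDiag (cyclicTrade μ (μ + 1) (μ + t)) (cyclicTrade μ μ a),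
      (isMuWayLatinTrade_cyclicTrade (by omega) (by omega)).blockDiag
        (isMuWayLatinTrade_cyclicTrade le_rfl ha), ?_⟩
    rw [tradeVolume_blockDiag, tradeVolume_cyclicTrade hμ₀, tradeVolume_cyclicTrade hμ₀]
end

section
/- Suppose n ≥ 4 and the intersection set I⁴[n] contains the full interval [0, ⌈n²/2⌉]. Then I⁴[2n] contains [0, 3n²] ∪ (I⁴[n] + 3n²), where I⁴[n] + 3n² denotes the shift of I⁴[n] by 3n². -/
lemma sq_mem (n : ℕ) [NeZero n] : n ^ 2 ∈ Spectrum 4 n := by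
  refine ⟨fun _ i j => i + j, ⟨?_, ?_, ?_⟩, ?_⟩
  · intro m i x y hxy; exact add_left_cancel hxy
  · intro m j x y hxy; exact add_right_cancel hxy
  · intro i j; exact Or.inl fun a b => rfl
  · unfold numFixed
    have : (Finset.univ.filter fun p : Fin n × Fin n =>
        IsFixedCell (fun _ i j => i + j : Fin 4 → Fin n → Fin n → Fin n) p.1 p.2) =
        Finset.univ := Finset.filter_true_of_mem (fun p _ => fun a b => rfl)
    rw [this, Finset.card_univ]
    simp [sq]

def dbl (n : ℕ) (F : Fin 2 → Fin 2 → (Fin 4 → Fin n → Fin n → Fin n)) :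
    Fin 4 → Fin (2 * n) → Fin (2 * n) → Fin (2 * n) := fun a I J =>
  finProdFinEquiv ((finProdFinEquiv.symm I).1 + (finProdFinEquiv.symm J).1,
    F (finProdFinEquiv.symm I).1 (finProdFinEquiv.symm J).1 a
      (finProdFinEquiv.symm I).2 (finProdFinEquiv.symm J).2)

lemma dbl_latin {n : ℕ} (F : Fin 2 → Fin 2 → (Fin 4 → Fin n → Fin n → Fin n))
    (hF : ∀ r s, IsMuWayLatinSquare (F r s)) : IsMuWayLatinSquare (dbl n F) := by
  refine ⟨?_, ?_, ?_⟩
  · intro a I J₁ J₂ hJ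
    have h1 := finProdFinEquiv.injective hJ
    have h2 : (finProdFinEquiv.symm J₁).1 = (finProdFinEquiv.symm J₂).1 := by
      have := congrArg Prod.fst h1
      simpa using add_left_cancel this
    have h3 := congrArg Prod.snd h1
    simp only at h3
    rw [h2] at h3
    have h4 := (hF _ _).1 a _ h3
    exact finProdFinEquiv.symm.injective (Prod.ext h2 h4)
  · intro a J I₁ I₂ hI
    simp only [dbl] at hI
    have h1 := finProdFinEquiv.injective hI
    have h2 : (finProdFinEquiv.symm I₁).1 = (finProdFinEquiv.symm I₂).1 := by
      have := congrArg Prod.fst h1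
      simpa using add_right_cancel this
    have h3 := congrArg Prod.snd h1
    simp only at h3
    rw [h2] at h3
    have h4 := (hF _ _).2.1 a _ h3
    exact finProdFinEquiv.symm.injective (Prod.ext h2 h4)
  · intro I J
    rcases (hF (finProdFinEquiv.symm I).1 (finProdFinEquiv.symm J).1).2.2
      (finProdFinEquiv.symm I).2 (finProdFinEquiv.symm J).2 with hfix | hinj
    · exact Or.inl fun a b => by simp only [dbl]; rw [hfix a b]
    · refine Or.inr fun a b hab => ?_
      have h1 := finProdFinEquiv.injective hab
      exact hinj (congrArg Prod.snd h1)

lemma dbl_fixed_iff {n : ℕ} (F : Fin 2 → Fin 2 → (Fin 4 → Fin n → Fin n → Fin n))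
    (I J : Fin (2 * n)) :
    IsFixedCell (dbl n F) I J ↔
      IsFixedCell (F (finProdFinEquiv.symm I).1 (finProdFinEquiv.symm J).1)
        (finProdFinEquiv.symm I).2 (finProdFinEquiv.symm J).2 := by
  constructor
  · intro hfix a b
    exact congrArg Prod.snd (finProdFinEquiv.injective (hfix a b))
  · intro hfix a b
    simp only [dbl]
    rw [hfix a b]

lemma numFixed_dbl {n : ℕ} (F : Fin 2 → Fin 2 → (Fin 4 → Fin n → Fin n → Fin n)) :
    numFixed (dbl n F) = ∑ r : Fin 2, ∑ s : Fin 2, numFixed (F r s) := by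
  classical
  unfold numFixed
  rw [Finset.card_filter]
  rw [Fintype.sum_equiv (Equiv.prodCongr (finProdFinEquiv (m := 2) (n := n))
        (finProdFinEquiv (m := 2) (n := n))).symm
    (fun I : Fin (2 * n) × Fin (2 * n) => if IsFixedCell (dbl n F) I.1 I.2 then 1 else 0)
    (fun p : (Fin 2 × Fin n) × (Fin 2 × Fin n) =>
      if IsFixedCell (F p.1.1 p.2.1) p.1.2 p.2.2 then 1 else 0)
    (fun I => by simp [dbl_fixed_iff])]
  simp only [Fintype.sum_prod_type]
  refine Finset.sum_congr rfl fun r _ => ?_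
  rw [Finset.sum_comm]
  refine Finset.sum_congr rfl fun s _ => ?_
  rw [Finset.card_filter]
  simp only [Fintype.sum_prod_type]

lemma dbl_mem {n a b c d : ℕ} (ha : a ∈ Spectrum 4 n) (hb : b ∈ Spectrum 4 n)
    (hc : c ∈ Spectrum 4 n) (hd : d ∈ Spectrum 4 n) :
    a + b + c + d ∈ Spectrum 4 (2 * n) := by
  obtain ⟨A, hA, hAn⟩ := ha
  obtain ⟨B, hB, hBn⟩ := hb
  obtain ⟨C, hC, hCn⟩ := hc
  obtain ⟨D, hD, hDn⟩ := hd
  refine ⟨dbl n ![![A, B], ![C, D]], dbl_latin _ ?_, ?_⟩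
  · intro r s
    fin_cases r <;> fin_cases s <;> simpa using ‹_›
  · rw [numFixed_dbl]
    simp [Fin.sum_univ_two, hAn, hBn, hCn, hDn]
    omega


open Pointwise in
theorem stmt_19 (n : ℕ) (hn : 4 ≤ n)
    (h : Set.Icc 0 ((n ^ 2 + 1) / 2) ⊆ Spectrum 4 n) :
    Set.Icc 0 (3 * n ^ 2) ∪ (Spectrum 4 n + ({3 * n ^ 2} : Set ℕ)) ⊆
      Spectrum 4 (2 * n) := by
  haveI : NeZero n := ⟨by omega⟩
  set m := (n ^ 2 + 1) / 2 with hm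
  have hmem : ∀ x ≤ m, x ∈ Spectrum 4 n := fun x hx => h ⟨Nat.zero_le _, hx⟩
  have hsq : n ^ 2 ∈ Spectrum 4 n := sq_mem n
  have h2m : n ^ 2 ≤ 2 * m := by omega
  intro k hk
  rcases hk with hk | hk
  · have hk3 : k ≤ 3 * n ^ 2 := hk.2
    by_cases hcase : k ≤ 2 * n ^ 2
    · -- four parts each ≤ m
      set a := min k m with ha
      set b := min (k - a) m with hb
      set c := min (k - a - b) m with hc
      set d := k - a - b - c with hd
      have hsum : a + b + c + d = k := by omega
      have hdm : d ≤ m := by omega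
      rw [← hsum]
      exact dbl_mem (hmem a (min_le_right _ _)) (hmem b (min_le_right _ _))
        (hmem c (min_le_right _ _)) (hmem d hdm)
    · -- k = n² + n² + c + d
      set c := min (k - 2 * n ^ 2) m with hc
      set d := k - 2 * n ^ 2 - c with hd
      have hdm : d ≤ m := by omega
      have hsum : n ^ 2 + n ^ 2 + c + d = k := by omega
      rw [← hsum]
      exact dbl_mem hsq hsq (hmem c (min_le_right _ _)) (hmem d hdm)
  · obtain ⟨s, hs, y, hy, hsy⟩ := Set.mem_add.mp hk
    rw [Set.mem_singleton_iff] at hy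
    have : k = s + n ^ 2 + n ^ 2 + n ^ 2 := by omega
    rw [this]
    exact dbl_mem hs hsq hsq hsq
end
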